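/- arXiv:1811.03731 — 8 statements merged into one kernel-verified Lean document; each statement's English description precedes it below -/
import Mathlib

section
/- Let n and t be positive integers with n even and n ≥ 6t−2. Define e_i = C(n/2, t−i)·C(n/2, t+i) for i ∈ {0,…,t}. Then e_i > e_{i+1} + t for each i ∈ {0,…,t−1}. -/
/-!
Write `m = n / 2`, `a = t - i - 1` and `k = t + i`, so that `e_i = C(m, a+1) C(m, k)` and
`e_{i+1} = C(m, a) C(m, k+1)`. Two applications of `C(m, j+1) (j+1) = C(m, j) (m-j)` give
`e_i (a+1)(m-k) = e_{i+1} (m-a)(k+1)`, and `(m-a)(k+1) - (a+1)(m-k) = (m+1)(2i+1)`, hence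
`(e_i - e_{i+1}) (a+1)(m-k) = e_{i+1} (m+1)(2i+1)`. It remains to see that `e_{i+1}` is large,
which follows from `C(m, k) ≥ C(m, min t 2)` since `m ≥ 3t - 1`.
-/
namespace Nat

theorem choose_le_choose_of_le_of_add_le {m j k : ℕ} (hjk : j ≤ k) (hkm : j + k ≤ m) :
    m.choose j ≤ m.choose k := by
  wlog hk : 2 * k ≤ m generalizing k
  · rw [← choose_symm (by omega : k ≤ m)]
    exact this (by omega) (by omega) (by omega)
  induction k, hjk using le_induction with
  | base => rfl
  | succ k hle ih =>
    exact (ih (by omega) (by omega)).trans (choose_le_succ_of_lt_half_left (by omega))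

theorem sq_mul_succ_lt_succ_mul_choose {m t k : ℕ} (ht : 0 < t) (htk : t ≤ k)
    (hkm : k + t ≤ m) (hm : 3 * t ≤ m + 1) : t ^ 2 * (t + 1) < (m + 1) * m.choose k := by
  obtain rfl | ⟨s, rfl⟩ : t = 1 ∨ ∃ s, t = s + 2 := by
    rcases t with _ | _ | s <;> simp_all
  · have : m ≤ m.choose k := by
      simpa using choose_le_choose_of_le_of_add_le (m := m) htk (by omega)
    nlinarith
  · have hc : m.choose 2 ≤ m.choose k := choose_le_choose_of_le_of_add_le (by omega) (by omega)
    obtain ⟨m, rfl⟩ : ∃ m', m = m' + 1 := ⟨m - 1, by omega⟩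
    have h2 : (m + 1).choose 2 * 2 = (m + 1) * m := by
      simpa using choose_succ_right_eq (m + 1) 1
    have hcube : (3 * s + 6) * ((3 * s + 5) * (3 * s + 4)) ≤ (m + 2) * ((m + 1) * m) :=
      Nat.mul_le_mul (by omega) (Nat.mul_le_mul (by omega) (by omega))
    nlinarith

theorem choose_mul_choose_mul_eq (m a k : ℕ) :
    m.choose (a + 1) * m.choose k * ((a + 1) * (m - k)) =
      m.choose a * m.choose (k + 1) * ((m - a) * (k + 1)) := by
  calc m.choose (a + 1) * m.choose k * ((a + 1) * (m - k))
      = (m.choose (a + 1) * (a + 1)) * (m.choose k * (m - k)) := by ring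
    _ = (m.choose a * (m - a)) * (m.choose (k + 1) * (k + 1)) := by
      rw [choose_succ_right_eq, choose_succ_right_eq]
    _ = _ := by ring

theorem choose_mul_choose_add_lt {m t i : ℕ} (hi : i < t) (hm : 3 * t ≤ m + 1) :
    m.choose (t - (i + 1)) * m.choose (t + (i + 1)) + t < m.choose (t - i) * m.choose (t + i) := by
  obtain ⟨a, rfl⟩ : ∃ a, t = a + i + 1 := ⟨t - (i + 1), by omega⟩
  obtain ⟨d, rfl⟩ : ∃ d, m = a + 2 * i + 2 + d := ⟨m - (a + 2 * i + 2), by omega⟩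
  set t := a + i + 1
  set m := a + 2 * i + 2 + d
  set k := t + i
  rw [show t - (i + 1) = a by omega, show t - i = a + 1 by omega, add_succ]
  have hsplit : (m - a) * (k + 1) = (a + 1) * (m - k) + (m + 1) * (2 * i + 1) := by
    simp only [m, k, t, show a + 2 * i + 2 + d - a = 2 * i + 2 + d by omega,
      show a + 2 * i + 2 + d - (a + i + 1 + i) = d + 1 by omega]
    ring
  have hbound :
      t * ((a + 1) * (m - k)) < m.choose a * m.choose (k + 1) * ((m + 1) * (2 * i + 1)) := by
    -- multiplying by `k + 1` turns `C(m, k+1)` into `C(m, k) (m - k)`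
    refine Nat.lt_of_mul_lt_mul_right (a := k + 1) ?_
    have hk : 0 < m - k := by omega
    calc t * ((a + 1) * (m - k)) * (k + 1) = t * ((a + 1) * (k + 1)) * (m - k) := by ring
      _ ≤ t * (t * (t + 1)) * (m - k) := by
          have : (a + 1) * (k + 1) ≤ t * (t + 1) := by simp only [k, t]; nlinarith
          gcongr
      _ = t ^ 2 * (t + 1) * (m - k) := by ring
      _ < (m + 1) * m.choose k * (m - k) := Nat.mul_lt_mul_of_pos_right
          (sq_mul_succ_lt_succ_mul_choose (by omega) (by omega) (by omega) hm) hk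
      _ ≤ m.choose a * (2 * i + 1) * ((m + 1) * m.choose k * (m - k)) :=
          Nat.le_mul_of_pos_left _ (Nat.mul_pos (choose_pos (by omega)) (by omega))
      _ = m.choose a * (m.choose k * (m - k)) * ((m + 1) * (2 * i + 1)) := by ring
      _ = m.choose a * m.choose (k + 1) * ((m + 1) * (2 * i + 1)) * (k + 1) := by
          rw [← choose_succ_right_eq]; ring
  refine Nat.lt_of_mul_lt_mul_right (a := (a + 1) * (m - k)) ?_
  calc (m.choose a * m.choose (k + 1) + t) * ((a + 1) * (m - k))
      < m.choose a * m.choose (k + 1) * ((m - a) * (k + 1)) := by rw [hsplit]; nlinarith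
    _ = m.choose (a + 1) * m.choose k * ((a + 1) * (m - k)) := (choose_mul_choose_mul_eq m a k).symm

end Nat

theorem stmt_0_general (n t : ℕ)
    (hnt : 6 * t - 2 ≤ n) (i : ℕ) (hi : i < t) :
    (n / 2).choose (t - (i + 1)) * (n / 2).choose (t + (i + 1)) + t
      < (n / 2).choose (t - i) * (n / 2).choose (t + i) :=
  Nat.choose_mul_choose_add_lt hi (by omega)

theorem stmt_0 (n t : ℕ) (hn : 0 < n) (ht : 0 < t) (hev : Even n)
    (hnt : 6 * t - 2 ≤ n) (i : ℕ) (hi : i < t) :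
    (n / 2).choose (t - (i + 1)) * (n / 2).choose (t + (i + 1)) + t
      < (n / 2).choose (t - i) * (n / 2).choose (t + i) :=
  stmt_0_general n t hnt i hi
end

section
/- Product construction for Sperner partition systems: if m, n, k are positive integers with m ≥ k and n ≥ k, and there exist an (m,k)-Sperner partition system with p partitions on a set X and an (n,k)-Sperner partition system with q partitions on a set Y disjoint from X, then there exists an (m+n,k)-Sperner partition system with k·p·q partitions on X ∪ Y. Specifically, indexing the classes of each partition by Z/kZ, the partitions σ_{i,j,y} = { π_{i,z} ∪ ρ_{j,z+y} : z ∈ Z/kZ } for all i, j and y ∈ Z/kZ form such a system. -/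
/-- A partition of the finite set `X` into `k` nonempty classes. -/
def IsPartitionInto {α : Type*} [DecidableEq α] (X : Finset α) (k : ℕ)
    (π : Finset (Finset α)) : Prop :=
  π.card = k ∧ (∀ A ∈ π, A.Nonempty) ∧
    (∀ A ∈ π, ∀ B ∈ π, A ≠ B → Disjoint A B) ∧ π.biUnion id = X

/-- An `(n,k)`-Sperner partition system on ground set `X`. -/
def IsSpernerSystem {α : Type*} [DecidableEq α] (X : Finset α) (k : ℕ)
    (P : Finset (Finset (Finset α))) : Prop :=
  (∀ π ∈ P, IsPartitionInto X k π) ∧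
    ∀ π ∈ P, ∀ π' ∈ P, π ≠ π' → ∀ A ∈ π, ∀ B ∈ π', ¬ A ⊆ B

/-!
A class `π_z ∪ ρ_{z+y}` of the product system splits along the disjoint ground sets into its
`X`-part `π_z` and its `Y`-part `ρ_{z+y}`. So if `π_z ∪ ρ_{z+y} ⊆ π'_{z'} ∪ ρ'_{z'+y'}`, then
`π_z ⊆ π'_{z'}` and `ρ_{z+y} ⊆ ρ'_{z'+y'}`; the Sperner property of the two factors forces
`π = π'` and `ρ = ρ'`, and inside a single partition containment of classes means equality, so
`z = z'` and `z + y = z' + y'`, i.e. `y = y'`. Hence the `k·p·q` partitions are distinct and form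
a Sperner system.
-/

open Finset Function

section

variable {α ι : Type*} [DecidableEq α]

theorem Finset.exists_univ_image_eq {β : Type*} [DecidableEq β] [Fintype ι] {s : Finset β}
    (h : s.card = Fintype.card ι) : ∃ f : ι → β, univ.image f = s := by
  let e : ι ≃ s := Fintype.equivOfCardEq (by rw [Fintype.card_coe, h])
  refine ⟨fun i => e i, ?_⟩
  ext x
  simp only [mem_image, mem_univ, true_and]
  constructor
  · rintro ⟨i, rfl⟩
    exact (e i).2
  · exact fun hx => ⟨e.symm ⟨x, hx⟩, by simp⟩

theorem subset_and_subset_of_union_subset_union {X Y A B A' B' : Finset α} (hXY : Disjoint X Y)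
    (hA : A ⊆ X) (hB : B ⊆ Y) (hA' : A' ⊆ X) (hB' : B' ⊆ Y) (h : A ∪ B ⊆ A' ∪ B') :
    A ⊆ A' ∧ B ⊆ B' :=
  ⟨(hXY.mono hA hB').left_le_of_le_sup_right (subset_union_left.trans h),
    (hXY.symm.mono hB hA').left_le_of_le_sup_left (subset_union_right.trans h)⟩

def IsIndexedPartition [Fintype ι] (X : Finset α) (a : ι → Finset α) : Prop :=
  (∀ i, (a i).Nonempty) ∧ Pairwise (Disjoint on a) ∧ univ.biUnion a = X

namespace IsIndexedPartition

variable [Fintype ι] {X : Finset α} {a : ι → Finset α}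

theorem eq_of_subset (h : IsIndexedPartition X a) {i j : ι} (hij : a i ⊆ a j) : i = j := by
  by_contra hne
  obtain ⟨x, hx⟩ := h.1 i
  exact disjoint_left.1 (h.2.1 hne) hx (hij hx)

theorem injective (h : IsIndexedPartition X a) : Function.Injective a :=
  fun _ _ hij => h.eq_of_subset hij.le

theorem subset (h : IsIndexedPartition X a) (i : ι) : a i ⊆ X :=
  h.2.2 ▸ subset_biUnion_of_mem a (mem_univ i)

theorem union_shift {G : Type*} [AddGroup G] [Fintype G] {X Y : Finset α} {a b : G → Finset α}
    (ha : IsIndexedPartition X a) (hb : IsIndexedPartition Y b) (hXY : Disjoint X Y) (y : G) :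
    IsIndexedPartition (X ∪ Y) fun z => a z ∪ b (z + y) := by
  refine ⟨fun z => (ha.1 z).mono subset_union_left, fun z z' hzz' => ?_, ?_⟩
  · simp only [onFun, disjoint_union_left, disjoint_union_right]
    exact ⟨⟨ha.2.1 hzz', hXY.symm.mono (hb.subset _) (ha.subset z')⟩,
      hXY.mono (ha.subset z) (hb.subset _), hb.2.1 (by simpa using hzz')⟩
  · ext x
    rw [← ha.2.2, ← hb.2.2]
    simp only [mem_biUnion, mem_univ, true_and, mem_union, exists_or]
    rw [(Equiv.addRight y).surjective.exists (p := fun w => x ∈ b w)]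
    rfl

end IsIndexedPartition

theorem isPartitionInto_image_iff [Fintype ι] {X : Finset α} {a : ι → Finset α} :
    IsPartitionInto X (Fintype.card ι) (univ.image a) ↔ IsIndexedPartition X a := by
  constructor
  · rintro ⟨hcard, hne, hdisj, hunion⟩
    have hinj : Function.Injective a := by
      rw [← card_univ, card_image_iff, coe_univ, Set.injOn_univ] at hcard
      exact hcard
    refine ⟨fun i => hne _ (mem_image_of_mem a (mem_univ i)), fun i j hij => ?_, ?_⟩
    · exact hdisj _ (mem_image_of_mem a (mem_univ i)) _ (mem_image_of_mem a (mem_univ j))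
        (hinj.ne hij)
    · rw [image_biUnion] at hunion
      exact hunion
  · intro h
    refine ⟨by rw [card_image_of_injective _ h.injective, card_univ], ?_, ?_, ?_⟩
    · simpa using h.1
    · simp only [mem_image, mem_univ, true_and]
      rintro _ ⟨i, rfl⟩ _ ⟨j, rfl⟩ hij
      exact h.2.1 fun e => hij (e ▸ rfl)
    · rw [image_biUnion]
      exact h.2.2

namespace IsSpernerSystem

variable [Fintype ι] {X : Finset α} {P : Finset (Finset (Finset α))}

theorem eq_of_subset {k : ℕ} (hP : IsSpernerSystem X k P) {π π' : Finset (Finset α)}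
    {A B : Finset α} (hπ : π ∈ P) (hπ' : π' ∈ P) (hA : A ∈ π) (hB : B ∈ π') (hAB : A ⊆ B) :
    π = π' := by
  by_contra hne
  exact hP.2 π hπ π' hπ' hne A hA B hB hAB

theorem exists_indexing (hP : IsSpernerSystem X (Fintype.card ι) P) :
    ∃ a : Finset (Finset α) → ι → Finset α, ∀ π ∈ P, univ.image (a π) = π := by
  have : ∀ π, ∃ f : ι → Finset α, π ∈ P → univ.image f = π := by
    intro π
    by_cases hπ : π ∈ P
    · obtain ⟨f, hf⟩ := exists_univ_image_eq (hP.1 π hπ).1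
      exact ⟨f, fun _ => hf⟩
    · exact ⟨fun _ => ∅, fun h => absurd h hπ⟩
  choose a ha using this
  exact ⟨a, ha⟩

variable {a : Finset (Finset α) → ι → Finset α}

theorem isIndexedPartition (hP : IsSpernerSystem X (Fintype.card ι) P)
    (ha : ∀ π ∈ P, univ.image (a π) = π) {π : Finset (Finset α)} (hπ : π ∈ P) :
    IsIndexedPartition X (a π) := by
  have h := hP.1 π hπ
  rw [← ha π hπ] at h
  exact isPartitionInto_image_iff.1 h

theorem eq_of_indexed_subset (hP : IsSpernerSystem X (Fintype.card ι) P)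
    (ha : ∀ π ∈ P, univ.image (a π) = π) {π π' : Finset (Finset α)} (hπ : π ∈ P)
    (hπ' : π' ∈ P) {i j : ι} (h : a π i ⊆ a π' j) : π = π' ∧ i = j := by
  have mem (σ) (hσ : σ ∈ P) (i : ι) : a σ i ∈ σ := (ha σ hσ).le (mem_image_of_mem _ (mem_univ i))
  obtain rfl := hP.eq_of_subset hπ hπ' (mem π hπ i) (mem π' hπ' j) h
  exact ⟨rfl, (hP.isIndexedPartition ha hπ).eq_of_subset h⟩

end IsSpernerSystem

section Product

variable {G : Type*} [AddGroup G] [Fintype G] {X Y : Finset α}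
  {P Q : Finset (Finset (Finset α))} {a b : Finset (Finset α) → G → Finset α}

/-- With `a π z` and `b ρ w` standing for the classes `π_z` and `ρ_w`, this is the partition
`σ_{π,ρ,y} = {π_z ∪ ρ_{z+y} : z ∈ G}`. -/
def productPartition (a b : Finset (Finset α) → G → Finset α)
    (t : Finset (Finset α) × Finset (Finset α) × G) : Finset (Finset α) :=
  univ.image fun z => a t.1 z ∪ b t.2.1 (z + t.2.2)

def productSystem (a b : Finset (Finset α) → G → Finset α) (P Q : Finset (Finset (Finset α))) :
    Finset (Finset (Finset α)) :=
  (P ×ˢ Q ×ˢ univ).image (productPartition a b)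

theorem eq_of_productPartition_class_subset (hP : IsSpernerSystem X (Fintype.card G) P)
    (hQ : IsSpernerSystem Y (Fintype.card G) Q) (ha : ∀ π ∈ P, univ.image (a π) = π)
    (hb : ∀ ρ ∈ Q, univ.image (b ρ) = ρ) (hXY : Disjoint X Y)
    {t t' : Finset (Finset α) × Finset (Finset α) × G} (ht : t ∈ P ×ˢ Q ×ˢ univ)
    (ht' : t' ∈ P ×ˢ Q ×ˢ univ) {z z' : G}
    (h : a t.1 z ∪ b t.2.1 (z + t.2.2) ⊆ a t'.1 z' ∪ b t'.2.1 (z' + t'.2.2)) :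
    t = t' ∧ z = z' := by
  obtain ⟨π, ρ, y⟩ := t
  obtain ⟨π', ρ', y'⟩ := t'
  simp only [mem_product, mem_univ, and_true] at ht ht' h
  obtain ⟨hX, hY⟩ := subset_and_subset_of_union_subset_union hXY
    ((hP.isIndexedPartition ha ht.1).subset z) ((hQ.isIndexedPartition hb ht.2).subset _)
    ((hP.isIndexedPartition ha ht'.1).subset z') ((hQ.isIndexedPartition hb ht'.2).subset _) h
  obtain ⟨rfl, rfl⟩ := hP.eq_of_indexed_subset ha ht.1 ht'.1 hX
  obtain ⟨rfl, hy⟩ := hQ.eq_of_indexed_subset hb ht.2 ht'.2 hY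
  rw [add_left_cancel hy]
  exact ⟨rfl, rfl⟩

theorem isSpernerSystem_productSystem (hP : IsSpernerSystem X (Fintype.card G) P)
    (hQ : IsSpernerSystem Y (Fintype.card G) Q) (ha : ∀ π ∈ P, univ.image (a π) = π)
    (hb : ∀ ρ ∈ Q, univ.image (b ρ) = ρ) (hXY : Disjoint X Y) :
    IsSpernerSystem (X ∪ Y) (Fintype.card G) (productSystem a b P Q) := by
  refine ⟨?_, ?_⟩
  · simp only [productSystem, forall_mem_image, mem_product, mem_univ, and_true]
    rintro ⟨π, ρ, y⟩ ⟨hπ, hρ⟩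
    exact isPartitionInto_image_iff.2
      ((hP.isIndexedPartition ha hπ).union_shift (hQ.isIndexedPartition hb hρ) hXY y)
  · simp only [productSystem, productPartition, forall_mem_image]
    intro t ht t' ht' hne z _ z' _ h
    obtain ⟨rfl, -⟩ := eq_of_productPartition_class_subset hP hQ ha hb hXY ht ht' h
    exact hne rfl

theorem card_productSystem (hP : IsSpernerSystem X (Fintype.card G) P)
    (hQ : IsSpernerSystem Y (Fintype.card G) Q) (ha : ∀ π ∈ P, univ.image (a π) = π)
    (hb : ∀ ρ ∈ Q, univ.image (b ρ) = ρ) (hXY : Disjoint X Y) :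
    (productSystem a b P Q).card = P.card * Q.card * Fintype.card G := by
  rw [productSystem, card_image_of_injOn, card_product, card_product, card_univ, mul_assoc]
  intro t ht t' ht' heq
  have : a t.1 0 ∪ b t.2.1 (0 + t.2.2) ∈ productPartition a b t' :=
    heq ▸ mem_image_of_mem _ (mem_univ 0)
  obtain ⟨z', -, hz'⟩ := mem_image.1 this
  exact (eq_of_productPartition_class_subset hP hQ ha hb hXY ht' ht hz'.le).1.symm

end Product

end

theorem stmt_6_general {α : Type*} [DecidableEq α] (k p q : ℕ)
    (hk : 0 < k)
    (X Y : Finset α) (hXY : Disjoint X Y)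
    (P : Finset (Finset (Finset α))) (hP : IsSpernerSystem X k P) (hPp : P.card = p)
    (Q : Finset (Finset (Finset α))) (hQ : IsSpernerSystem Y k Q) (hQq : Q.card = q) :
    ∃ R : Finset (Finset (Finset α)),
      IsSpernerSystem (X ∪ Y) k R ∧ R.card = k * p * q := by
  have : NeZero k := ⟨hk.ne'⟩
  rw [← ZMod.card k] at hP hQ
  obtain ⟨a, ha⟩ := hP.exists_indexing
  obtain ⟨b, hb⟩ := hQ.exists_indexing
  refine ⟨productSystem a b P Q, ?_, ?_⟩
  · simpa only [ZMod.card] using isSpernerSystem_productSystem hP hQ ha hb hXY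
  · rw [card_productSystem hP hQ ha hb hXY, ZMod.card, hPp, hQq]
    ring

/-- Product construction: from an `(m,k)`-Sperner partition system with `p` partitions
and an `(n,k)`-Sperner partition system with `q` partitions on a disjoint ground set,
one obtains an `(m+n,k)`-Sperner partition system with `k·p·q` partitions. -/
theorem stmt_6 {α : Type*} [DecidableEq α] (m n k p q : ℕ)
    (hk : 0 < k) (hm : k ≤ m) (hn : k ≤ n)
    (X Y : Finset α) (hXY : Disjoint X Y) (hX : X.card = m) (hY : Y.card = n)
    (P : Finset (Finset (Finset α))) (hP : IsSpernerSystem X k P) (hPp : P.card = p)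
    (Q : Finset (Finset (Finset α))) (hQ : IsSpernerSystem Y k Q) (hQq : Q.card = q) :
    ∃ R : Finset (Finset (Finset α)),
      IsSpernerSystem (X ∪ Y) k R ∧ R.card = k * p * q :=
  stmt_6_general k p q hk X Y hXY P hP hPp Q hQ hQq
end

section
/- Let k ≥ 3, n > 2k, and write n = ck + r with 2 ≤ r ≤ k−1. Let NLB(n,k) = (1/k)C(n−r,c) and MMS(n,k) = C(n,c)/(k − r + r(c+1)/(n−c)). Then NLB(n,k)/MMS(n,k) < (k − r + r(c+1)/(n−c))/k ≤ (k − 1)/k. -/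
lemma choose_lt_succ_aux (m c : ℕ) (hc : 1 ≤ c) (hcm : c ≤ m) :
    m.choose c < (m + 1).choose c := by
  obtain ⟨c', rfl⟩ := Nat.exists_eq_add_of_le' hc
  rw [Nat.choose_succ_succ']
  have : 0 < m.choose c' := Nat.choose_pos (by omega)
  omega

theorem stmt_8 (n k c r : ℕ) (hk : 3 ≤ k) (hn : 2 * k < n)
    (hnck : n = c * k + r) (hr2 : 2 ≤ r) (hrk : r ≤ k - 1) :
    ((((n - r).choose c : ℚ)) / k) /
        ((n.choose c : ℚ) / ((k : ℚ) - r + (r : ℚ) * ((c : ℚ) + 1) / ((n : ℚ) - c)))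
      < ((k : ℚ) - r + (r : ℚ) * ((c : ℚ) + 1) / ((n : ℚ) - c)) / k ∧
    ((k : ℚ) - r + (r : ℚ) * ((c : ℚ) + 1) / ((n : ℚ) - c)) / k ≤ ((k : ℚ) - 1) / k := by
  have hc2 : 2 ≤ c := by
    rcases Nat.lt_or_ge c 2 with h | h
    · interval_cases c <;> omega
    · exact h
  have hck : c ≤ c * k := Nat.le_mul_of_pos_right c (by omega)
  have hnr : n - r = c * k := by omega
  -- strict choose inequality
  have hAB : (n - r).choose c < n.choose c := by
    calc (n - r).choose c < (n - r + 1).choose c :=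
          choose_lt_succ_aux _ _ (by omega) (by omega)
      _ ≤ n.choose c := Nat.choose_le_choose c (by omega)
  have hABq : ((n - r).choose c : ℚ) < (n.choose c : ℚ) := by exact_mod_cast hAB
  have hB : (0 : ℚ) < (n.choose c : ℚ) := by
    exact_mod_cast Nat.choose_pos (show c ≤ n by omega)
  -- cast facts
  have hn' : (n : ℚ) = c * k + r := by exact_mod_cast congrArg (Nat.cast : ℕ → ℚ) hnck
  have hk' : (3 : ℚ) ≤ k := by exact_mod_cast hk
  have hr' : (2 : ℚ) ≤ r := by exact_mod_cast hr2
  have hc' : (2 : ℚ) ≤ c := by exact_mod_cast hc2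
  have hrk' : (r : ℚ) + 1 ≤ k := by exact_mod_cast (show r + 1 ≤ k by omega)
  have hnc : (0 : ℚ) < (n : ℚ) - c := by nlinarith
  set Q : ℚ := (r : ℚ) * ((c : ℚ) + 1) / ((n : ℚ) - c) with hQ
  have hQ0 : 0 < Q := div_pos (by nlinarith) hnc
  have hQ1 : Q ≤ 1 := by
    rw [hQ, div_le_one hnc]
    nlinarith
  set D : ℚ := (k : ℚ) - r + Q with hD
  have hD0 : 0 < D := by
    have : (1 : ℚ) ≤ (k : ℚ) - r := by linarith
    linarith
  have hk0 : (0 : ℚ) < (k : ℚ) := by linarith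
  have hBne : (n.choose c : ℚ) ≠ 0 := ne_of_gt hB
  have hDne : D ≠ 0 := ne_of_gt hD0
  have hkne : (k : ℚ) ≠ 0 := ne_of_gt hk0
  constructor
  · have heq : ((n - r).choose c : ℚ) / k / ((n.choose c : ℚ) / D)
        = (((n - r).choose c : ℚ) / (n.choose c : ℚ)) * (D / k) := by
      rw [div_div_div_eq, div_mul_div_comm]
      ring_nf
    rw [heq]
    calc (((n - r).choose c : ℚ) / (n.choose c : ℚ)) * (D / k)
        < 1 * (D / k) :=
          mul_lt_mul_of_pos_right ((div_lt_one hB).2 hABq) (div_pos hD0 hk0)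
      _ = D / k := one_mul _
  · gcongr
    linarith
end

section
/- Let n ≥ k ≥ 3 be integers and write n = ck + r with 0 ≤ r ≤ k−1, c ≥ 2. Then k·MMS(n,k)/MMS(n+k,k) ≤ (1 − (k−1)/(k(c+2)))^c ≤ 25/36, where MMS(n,k) = C(n,c)/(k − r + r(c+1)/(n−c)). In particular this ratio is bounded away from 1. -/
/-!
Put `x = 1 - (k - 1) / (k (c + 2))`. The ratio splits as `k C(n, c) / C(n + k, c + 1)` times the
quotient of the two MMS denominators, which is at most `1` because
`r (c + 2) / (n + k - c - 1) ≤ r (c + 1) / (n - c)` (equivalent to `n + 1 ≤ (c + 1) k`).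
Next `k C(n, c) / C(n + k, c + 1) = k (c + 1) / (n + k) · (n)_c / (n + k - 1)_c`; the first factor
is at most `1` since `c k ≤ n`, and each factor `n - i` of `(n)_c` is at most `x (n + k - 1 - i)`
because `n + k - 1 - i ≤ k (c + 2)`. Finally `x ≤ 1 - t` with `t = 2 / (3 (c + 2))` as `k ≥ 3`, and
`(1 - t)^c ≤ 1 / (1 + c t) ≤ 25 / 36` for `c ≥ 4` by Bernoulli's inequality applied to `(1 + t)^c`;
`c = 2, 3` are checked directly.
-/

section OrderedField

variable {K : Type*} [Field K] [LinearOrder K] [IsStrictOrderedRing K]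

lemma one_sub_pow_le_inv_one_add_mul {t : K} (ht₀ : 0 ≤ t) (ht₁ : t ≤ 1) (c : ℕ) :
    (1 - t) ^ c ≤ (1 + c * t)⁻¹ := by
  rw [← one_div, le_div_iff₀ (by positivity)]
  calc (1 - t) ^ c * (1 + c * t) ≤ (1 - t) ^ c * (1 + t) ^ c :=
        mul_le_mul_of_nonneg_left (one_add_mul_le_pow (by linarith) c) (pow_nonneg (by linarith) c)
    _ = (1 - t ^ 2) ^ c := by rw [← mul_pow]; ring
    _ ≤ 1 := pow_le_one₀ (by nlinarith) (by nlinarith)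

lemma sub_le_mul_one_sub_div {a m b : K} (ha : 0 ≤ a) (hb : 0 < b) (hm : m ≤ b) :
    m - a ≤ m * (1 - a / b) := by
  have : a * m / b ≤ a := by rw [div_le_iff₀ hb]; nlinarith
  linarith [show m * (1 - a / b) = m - a * m / b by ring]

lemma mul_add_two_div_le_mul_add_one_div {c n k r : K} (hr : 0 ≤ r) (hcn : c < n) (hk : 1 ≤ k)
    (hn : n + 1 ≤ (c + 1) * k) :
    r * (c + 2) / (n + k - (c + 1)) ≤ r * (c + 1) / (n - c) := by
  rw [div_le_div_iff₀ (by linarith) (by linarith)]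
  nlinarith

end OrderedField

lemma descFactorial_le_descFactorial_mul_pow {R : Type*} [CommSemiring R] [PartialOrder R]
    [IsOrderedRing R] {n m c : ℕ} {x : R} (h : ∀ i < c, ((n - i : ℕ) : R) ≤ (m - i : ℕ) * x) :
    (n.descFactorial c : R) ≤ m.descFactorial c * x ^ c := by
  simp only [Nat.descFactorial_eq_prod_range, Nat.cast_prod]
  calc ∏ i ∈ Finset.range c, ((n - i : ℕ) : R) ≤ ∏ i ∈ Finset.range c, ((m - i : ℕ) * x) :=
        Finset.prod_le_prod (fun _ _ => Nat.cast_nonneg _) fun i hi => h i (Finset.mem_range.1 hi)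
    _ = _ := by rw [Finset.prod_mul_distrib, Finset.prod_const, Finset.card_range]

lemma cast_choose_div_choose_succ {K : Type*} [Field K] [CharZero K] (n m c : ℕ) :
    (n.choose c : K) / (m + 1).choose (c + 1) =
      (c + 1) / (m + 1) * (n.descFactorial c / m.descFactorial c) := by
  have hc₀ : (c.factorial : K) ≠ 0 := by exact_mod_cast c.factorial_ne_zero
  have hm : ((m + 1).choose (c + 1) : K) = (m + 1) * m.choose c / (c + 1) := by
    rw [eq_div_iff (Nat.cast_add_one_ne_zero c)]
    exact_mod_cast (Nat.add_one_mul_choose_eq m c).symm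
  simp only [Nat.descFactorial_eq_factorial_mul_choose, Nat.cast_mul]
  rw [mul_div_mul_left _ _ hc₀, hm, div_div_eq_mul_div, mul_comm (n.choose c : K),
    mul_div_mul_comm]

lemma one_sub_two_div_pow_le_25_div_36 (c : ℕ) (hc : 2 ≤ c) :
    (1 - 2 / (3 * ((c : ℚ) + 2))) ^ c ≤ 25 / 36 := by
  rcases lt_or_ge c 4 with hc4 | hc4
  · interval_cases c <;> norm_num
  have hc4' : (4 : ℚ) ≤ c := by exact_mod_cast hc4
  calc (1 - 2 / (3 * ((c : ℚ) + 2))) ^ c ≤ (1 + c * (2 / (3 * ((c : ℚ) + 2))))⁻¹ :=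
        one_sub_pow_le_inv_one_add_mul (by positivity)
          (by rw [div_le_one (by positivity)]; linarith) c
    _ ≤ 25 / 36 := by
        rw [inv_le_comm₀ (by positivity) (by norm_num), mul_div_assoc', ← sub_le_iff_le_add',
          le_div_iff₀ (by positivity)]
        norm_num
        linarith

lemma one_sub_div_pow_le_25_div_36 (k c : ℕ) (hk : 3 ≤ k) (hc : 2 ≤ c) :
    (1 - ((k : ℚ) - 1) / ((k : ℚ) * ((c : ℚ) + 2))) ^ c ≤ 25 / 36 := by
  have hk' : (3 : ℚ) ≤ k := by exact_mod_cast hk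
  refine le_trans (pow_le_pow_left₀ ?_ ?_ c) (one_sub_two_div_pow_le_25_div_36 c hc)
  · rw [sub_nonneg, div_le_one (by positivity)]; nlinarith
  · rw [sub_le_sub_iff_left, div_le_div_iff₀ (by positivity) (by positivity)]; nlinarith

lemma mmsDenominator_ratio_le_one (n k c r : ℕ) (hrk : r < k) (hcn : c < n)
    (hn : n + 1 ≤ (c + 1) * k) :
    ((k : ℚ) - r + (r : ℚ) * ((c : ℚ) + 2) / ((n : ℚ) + k - (c + 1))) /
        ((k : ℚ) - r + (r : ℚ) * ((c : ℚ) + 1) / ((n : ℚ) - c)) ≤ 1 := by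
  have hrk' : (r : ℚ) < k := by exact_mod_cast hrk
  have hcn' : (c : ℚ) < n := by exact_mod_cast hcn
  have hk : (1 : ℚ) ≤ k := by exact_mod_cast (by omega : 1 ≤ k)
  have hn' : (n : ℚ) + 1 ≤ (c + 1) * k := by exact_mod_cast hn
  have hle := mul_add_two_div_le_mul_add_one_div (Nat.cast_nonneg (α := ℚ) r) hcn' hk hn'
  have hpos : 0 ≤ (r : ℚ) * ((c : ℚ) + 1) / ((n : ℚ) - c) :=
    div_nonneg (by positivity) (by linarith)
  exact div_le_one_of_le₀ (by linarith) (by linarith)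

lemma mul_choose_div_choose_succ_le (n k c : ℕ) (hck : c * k ≤ n) (hn : n + 1 ≤ (c + 1) * k) :
    (k : ℚ) * n.choose c / (n + k).choose (c + 1) ≤
      (1 - ((k : ℚ) - 1) / ((k : ℚ) * ((c : ℚ) + 2))) ^ c := by
  have hk : 1 ≤ k := by nlinarith
  obtain ⟨m, hm⟩ : ∃ m, n + k = m + 1 := ⟨n + k - 1, by omega⟩
  have hcn : c ≤ n := le_trans (Nat.le_mul_of_pos_right c hk) hck
  have hmk : m ≤ k * (c + 2) := by nlinarith
  set x := 1 - ((k : ℚ) - 1) / ((k : ℚ) * ((c : ℚ) + 2))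
  have hfactor : ∀ i < c, ((n - i : ℕ) : ℚ) ≤ (m - i : ℕ) * x := by
    intro i hi
    have hmi : m - i = (n - i) + (k - 1) := by omega
    have hk₁ : ((k - 1 : ℕ) : ℚ) = k - 1 := by rw [Nat.cast_sub hk, Nat.cast_one]
    have hb : ((n - i : ℕ) : ℚ) + (k - 1) ≤ k * (c + 2) := by
      rw [← hk₁]; exact_mod_cast (by omega : n - i + (k - 1) ≤ k * (c + 2))
    rw [hmi, Nat.cast_add, hk₁]
    simpa only [add_sub_cancel_right] using
      sub_le_mul_one_sub_div (a := (k : ℚ) - 1) (by rw [← hk₁]; positivity) (by positivity) hb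
  have hdesc : (0 : ℚ) < m.descFactorial c := by exact_mod_cast Nat.descFactorial_pos.2 (by omega)
  have hkc : (k : ℚ) * (c + 1) / (m + 1) ≤ 1 := by
    rw [div_le_one (by positivity)]
    exact_mod_cast (by nlinarith : k * (c + 1) ≤ m + 1)
  calc (k : ℚ) * n.choose c / (n + k).choose (c + 1)
      = k * (c + 1) / (m + 1) * (n.descFactorial c / m.descFactorial c) := by
        rw [hm, mul_div_assoc, cast_choose_div_choose_succ]; ring
    _ ≤ 1 * x ^ c := by
        refine mul_le_mul hkc ?_ (by positivity) zero_le_one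
        rw [div_le_iff₀ hdesc, mul_comm]
        exact descFactorial_le_descFactorial_mul_pow hfactor
    _ = x ^ c := one_mul _

theorem stmt_9_general (n k c r : ℕ) (hk : 3 ≤ k) (hc : 2 ≤ c)
    (hnck : n = c * k + r) (hrk : r ≤ k - 1) :
    (k : ℚ) * ((n.choose c : ℚ) / ((k : ℚ) - r + (r : ℚ) * ((c : ℚ) + 1) / ((n : ℚ) - c))) /
        (((n + k).choose (c + 1) : ℚ) /
          ((k : ℚ) - r + (r : ℚ) * ((c : ℚ) + 2) / ((n : ℚ) + k - (c + 1))))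
      ≤ (1 - ((k : ℚ) - 1) / ((k : ℚ) * ((c : ℚ) + 2))) ^ c ∧
    (1 - ((k : ℚ) - 1) / ((k : ℚ) * ((c : ℚ) + 2))) ^ c ≤ 25 / 36 := by
  have hck : c * k ≤ n := by omega
  have hn : n + 1 ≤ (c + 1) * k := by rw [add_one_mul]; omega
  have hcn : c < n := by nlinarith
  refine ⟨?_, one_sub_div_pow_le_25_div_36 k c hk hc⟩
  calc _ = (k : ℚ) * n.choose c / (n + k).choose (c + 1) *
        (((k : ℚ) - r + (r : ℚ) * ((c : ℚ) + 2) / ((n : ℚ) + k - (c + 1))) /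
          ((k : ℚ) - r + (r : ℚ) * ((c : ℚ) + 1) / ((n : ℚ) - c))) := by
        simp only [div_eq_mul_inv, mul_inv, inv_inv]; ring
    _ ≤ (k : ℚ) * n.choose c / (n + k).choose (c + 1) * 1 :=
        mul_le_mul_of_nonneg_left (mmsDenominator_ratio_le_one n k c r (by omega) hcn hn)
          (by positivity)
    _ ≤ _ := (mul_one _).trans_le (mul_choose_div_choose_succ_le n k c hck hn)

theorem stmt_9 (n k c r : ℕ) (hk : 3 ≤ k) (hkn : k ≤ n) (hc : 2 ≤ c)
    (hnck : n = c * k + r) (hrk : r ≤ k - 1) :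
    (k : ℚ) * ((n.choose c : ℚ) / ((k : ℚ) - r + (r : ℚ) * ((c : ℚ) + 1) / ((n : ℚ) - c))) /
        (((n + k).choose (c + 1) : ℚ) /
          ((k : ℚ) - r + (r : ℚ) * ((c : ℚ) + 2) / ((n : ℚ) + k - (c + 1))))
      ≤ (1 - ((k : ℚ) - 1) / ((k : ℚ) * ((c : ℚ) + 2))) ^ c ∧
    (1 - ((k : ℚ) - 1) / ((k : ℚ) * ((c : ℚ) + 2))) ^ c ≤ 25 / 36 :=
  stmt_9_general n k c r hk hc hnck hrk
end

section
/- For a fixed integer c ≥ 2, the function LL_c is monotonically increasing on [1, ∞), where LL_c(x) = C(q, c−1) with q the unique real number q ≥ c satisfying C(q, c) = x, and C(y,i) = y(y−1)⋯(y−i+1)/i! for real y ≥ i. -/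
/-- The generalized binomial coefficient `C(y, i) = y(y-1)⋯(y-i+1)/i!` for real `y`. -/
noncomputable def realChoose (y : ℝ) (i : ℕ) : ℝ :=
  (∏ j ∈ Finset.range i, (y - j)) / (Nat.factorial i)

lemma monotoneOn_realChoose (i : ℕ) :
    MonotoneOn (realChoose · i) (Set.Ici ((i : ℝ) - 1)) := by
  intro q hq q' _ hqq'
  have hfactor {j : ℕ} (hj : j ∈ Finset.range i) : (j : ℝ) ≤ q := by
    have : j + 1 ≤ i := Finset.mem_range.mp hj
    have : (j : ℝ) + 1 ≤ i := by exact_mod_cast this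
    linarith [Set.mem_Ici.mp hq]
  refine div_le_div_of_nonneg_right (Finset.prod_le_prod ?_ ?_) (Nat.cast_nonneg _)
  · exact fun j hj => sub_nonneg.mpr (hfactor hj)
  · exact fun j _ => sub_le_sub_right hqq' _

lemma strictMonoOn_realChoose {i : ℕ} (hi : 1 ≤ i) :
    StrictMonoOn (realChoose · i) (Set.Ici (i : ℝ)) := by
  intro q hq q' _ hqq'
  have hfactor {j : ℕ} (hj : j ∈ Finset.range i) : (j : ℝ) < q := by
    have : (j : ℝ) < i := by exact_mod_cast Finset.mem_range.mp hj
    linarith [Set.mem_Ici.mp hq]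
  refine div_lt_div_of_pos_right (Finset.prod_lt_prod_of_nonempty ?_ ?_ ?_) (by positivity)
  · exact fun j hj => sub_pos.mpr (hfactor hj)
  · exact fun j _ => sub_lt_sub_right hqq' _
  · exact Finset.nonempty_range_iff.mpr (by omega)

theorem stmt_10_general (c : ℕ) (hc : 2 ≤ c) (x₁ x₂ q₁ q₂ : ℝ)
    (hx : x₁ ≤ x₂)
    (hq₁ : (c : ℝ) ≤ q₁) (hq₂ : (c : ℝ) ≤ q₂)
    (hq₁x : realChoose q₁ c = x₁) (hq₂x : realChoose q₂ c = x₂) :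
    realChoose q₁ (c - 1) ≤ realChoose q₂ (c - 1) := by
  have hqq : q₁ ≤ q₂ := by
    rw [← (strictMonoOn_realChoose (by omega)).le_iff_le hq₁ hq₂]
    simpa only [hq₁x, hq₂x] using hx
  have hq₁' : ((c - 1 : ℕ) : ℝ) - 1 ≤ q₁ := by
    rw [Nat.cast_sub (by omega), Nat.cast_one]
    linarith
  exact monotoneOn_realChoose (c - 1) hq₁' (hq₁'.trans hqq) hqq

/-- For a fixed integer `c ≥ 2`, the function `LL_c` is monotonically increasing on
`[1, ∞)`: if `x₁ ≤ x₂` then `LL_c x₁ ≤ LL_c x₂`, where `LL_c x = C(q, c-1)` for the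
unique `q ≥ c` with `C(q, c) = x`. -/
theorem stmt_10 (c : ℕ) (hc : 2 ≤ c) (x₁ x₂ q₁ q₂ : ℝ)
    (hx₁ : 1 ≤ x₁) (hx₂ : 1 ≤ x₂) (hx : x₁ ≤ x₂)
    (hq₁ : (c : ℝ) ≤ q₁) (hq₂ : (c : ℝ) ≤ q₂)
    (hq₁x : realChoose q₁ c = x₁) (hq₂x : realChoose q₂ c = x₂) :
    realChoose q₁ (c - 1) ≤ realChoose q₂ (c - 1) :=
  stmt_10_general c hc x₁ x₂ q₁ q₂ hx hq₁ hq₂ hq₁x hq₂x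
end

section
/- Let H be a clutter with edge set ℰ and let c ≥ 1 be an integer such that every edge of H has cardinality at least c. Then |∂^c(ℰ)| ≥ min(|ℰ|, C(2c+1, c) + 1), where ∂^c(ℰ) is the family of all c-subsets of the vertex set contained in some edge of ℰ. -/
open Finset
open scoped FinsetFamily

attribute [-instance] instDecidableEqFin

namespace Stmt13Aux

variable {α : Type*} [DecidableEq α]

/-- Counting lemma: a family of `r`-subsets of a set `W` with `#W ≤ 2r-1` has shadow
at least as large as itself. -/
lemma card_le_card_shadow {r : ℕ} (hr : 1 ≤ r) {W : Finset α} (hW : #W ≤ 2 * r - 1)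
    {𝒮 : Finset (Finset α)} (h𝒮 : ∀ s ∈ 𝒮, s ⊆ W ∧ #s = r) :
    𝒮.card ≤ #(∂ 𝒮) := by
  have key : #𝒮 * r ≤ #(∂ 𝒮) * r := by
    apply card_mul_le_card_mul (fun s t => t ⊆ s)
    · intro s hs
      have hcard : #s = r := (h𝒮 s hs).2
      have hsub : s.powersetCard (r - 1) ⊆ (∂ 𝒮).bipartiteAbove (fun s t => t ⊆ s) s := by
        intro t ht
        rw [mem_powersetCard] at ht
        rw [mem_bipartiteAbove]
        refine ⟨?_, ht.1⟩
        rw [mem_shadow_iff_exists_mem_card_add_one]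
        exact ⟨s, hs, ht.1, by omega⟩
      have hch : (#s).choose (r - 1) = r := by
        rw [hcard, ← Nat.choose_symm (by omega : r - 1 ≤ r),
          (by omega : r - (r - 1) = 1), Nat.choose_one_right]
      calc r = (#s).choose (r - 1) := hch.symm
        _ = #(s.powersetCard (r - 1)) := (card_powersetCard _ _).symm
        _ ≤ _ := card_le_card hsub
    · intro t ht
      obtain ⟨s₀, hs₀, hts₀, hcs₀⟩ := mem_shadow_iff_exists_mem_card_add_one.1 ht
      have htr : #t = r - 1 := by have := (h𝒮 s₀ hs₀).2; omega
      have htW : t ⊆ W := hts₀.trans (h𝒮 s₀ hs₀).1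
      have hsub : 𝒮.bipartiteBelow (fun s t => t ⊆ s) t ⊆ (W \ t).image (fun x => insert x t) := by
        intro s hs
        rw [mem_bipartiteBelow] at hs
        obtain ⟨hs𝒮, hts⟩ := hs
        have hcd : #(s \ t) = 1 := by
          rw [card_sdiff_of_subset hts, (h𝒮 s hs𝒮).2, htr]; omega
        obtain ⟨x, hx⟩ := card_eq_one.1 hcd
        have hxs : x ∈ s ∧ x ∉ t := by
          have : x ∈ s \ t := hx ▸ mem_singleton_self x
          exact ⟨(mem_sdiff.1 this).1, (mem_sdiff.1 this).2⟩
        refine mem_image.2 ⟨x, mem_sdiff.2 ⟨(h𝒮 s hs𝒮).1 hxs.1, hxs.2⟩, ?_⟩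
        apply Finset.Subset.antisymm
        · intro y hy
          rcases mem_insert.1 hy with rfl | hy'
          · exact hxs.1
          · exact hts hy'
        · intro y hy
          by_cases hyt : y ∈ t
          · exact mem_insert_of_mem hyt
          · have : y ∈ s \ t := mem_sdiff.2 ⟨hy, hyt⟩
            rw [hx, mem_singleton] at this
            exact this ▸ mem_insert_self x t
      calc #(𝒮.bipartiteBelow (fun s t => t ⊆ s) t) ≤ #((W \ t).image (fun x => insert x t)) :=
            card_le_card hsub
        _ ≤ #(W \ t) := card_image_le
        _ = #W - #t := card_sdiff_of_subset htW
        _ ≤ r := by omega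
  exact Nat.le_of_mul_le_mul_right key (by omega)

/-- There exist colex initial segments of every feasible size. -/
lemma exists_isInitSeg (n r s : ℕ) (hs : s ≤ #(powersetCard r (univ : Finset (Fin n)))) :
    ∃ 𝒞 : Finset (Finset (Fin n)), Colex.IsInitSeg 𝒞 r ∧ #𝒞 = s := by
  classical
  set PP : Finset (Colex (Finset (Fin n))) := (powersetCard r (univ : Finset (Fin n))).image toColex
    with hPP
  have hinj : Function.Injective (toColex : Finset (Fin n) → Colex (Finset (Fin n))) :=
    fun a b h => toColex_inj.1 h
  have hN : #PP = #(powersetCard r (univ : Finset (Fin n))) := card_image_of_injective _ hinj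
  set φ := PP.orderIsoOfFin rfl with hφ
  have hsN : s ≤ #PP := hN ▸ hs
  set A : Finset (Fin #PP) := (Finset.range s).attachFin
    (fun m hm => lt_of_lt_of_le (mem_range.1 hm) hsN) with hA
  have hmemA : ∀ j : Fin #PP, j ∈ A ↔ (j : ℕ) < s := by
    intro j
    rw [hA, mem_attachFin, mem_range]
  refine ⟨A.image (fun j => ofColex (φ j : Colex (Finset (Fin n)))), ⟨?_, ?_⟩, ?_⟩
  · intro t ht
    simp only [coe_image, Set.mem_image, mem_coe] at ht
    obtain ⟨j, _, rfl⟩ := ht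
    obtain ⟨u, hu, hu'⟩ := mem_image.1
      (show (↑(φ j) : Colex (Finset (Fin n))) ∈ (powersetCard r (univ : Finset (Fin n))).image
        toColex from (φ j).2)
    calc #(ofColex (φ j : Colex (Finset (Fin n))))
        = #(ofColex (toColex u)) :=
          congrArg (fun x : Colex (Finset (Fin n)) => #(ofColex x)) hu'.symm
      _ = r := (mem_powersetCard.1 hu).2
  · rintro t' t ht ⟨hlt, htr⟩
    rw [mem_image] at ht
    obtain ⟨j, hj, rfl⟩ := ht
    have htP : toColex t ∈ PP := by
      rw [hPP, mem_image]
      exact ⟨t, mem_powersetCard.2 ⟨subset_univ _, htr⟩, rfl⟩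
    obtain ⟨j', hj'⟩ := φ.surjective ⟨_, htP⟩
    have hφlt : φ j' < φ j := by
      rw [← Subtype.coe_lt_coe, hj']
      simpa using hlt
    have hjj : j' < j := φ.lt_iff_lt.1 hφlt
    rw [mem_image]
    refine ⟨j', (hmemA j').2 (lt_trans hjj ((hmemA j).1 hj)), ?_⟩
    rw [hj']
    rfl
  · rw [card_image_of_injOn, hA, card_attachFin, card_range]
    intro a _ b _ h
    have : φ a = φ b := Subtype.ext (ofColex_inj.1 h)
    exact φ.injective this

/-- The set of the first `k` elements of `Fin n`. -/
def W (n k : ℕ) : Finset (Fin n) := univ.filter fun x : Fin n => (x : ℕ) < k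

lemma card_W_le (n k : ℕ) : #(W n k) ≤ k := by
  have : ∀ x ∈ W n k, (x : ℕ) ∈ Finset.range k := by
    intro x hx
    rw [mem_range]
    exact (mem_filter.1 hx).2
  calc #(W n k) ≤ #(Finset.range k) :=
        card_le_card_of_injOn (fun x => (x : ℕ)) this (fun a _ b _ h => Fin.val_injective h)
    _ = k := card_range k

lemma card_W (n k : ℕ) (h : k ≤ n) : #(W n k) = k := by
  have hlt : ∀ m ∈ Finset.range k, m < n := fun m hm => lt_of_lt_of_le (mem_range.1 hm) h
  have : W n k = (Finset.range k).attachFin hlt := by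
    ext x
    rw [mem_attachFin, mem_range, W, mem_filter]
    simp
  rw [this, card_attachFin, card_range]

/-- If an initial segment contains a set with an element `≥ k`, it contains all `r`-subsets
of the first `k` elements. -/
lemma full_level_subset {n r k : ℕ} {𝒞 : Finset (Finset (Fin n))} (h𝒞 : Colex.IsInitSeg 𝒞 r)
    {t : Finset (Fin n)} (ht : t ∈ 𝒞) {a : Fin n} (ha : a ∈ t) (hk : k ≤ (a : ℕ)) :
    powersetCard r (W n k) ⊆ 𝒞 := by
  intro u hu
  rw [mem_powersetCard] at hu
  have haW : a ∉ W n k := by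
    rw [W, mem_filter]
    push_neg
    intro _
    omega
  have hau : a ∉ u := fun h => haW (hu.1 h)
  apply h𝒞.2 ht
  refine ⟨?_, hu.2⟩
  rw [Colex.toColex_lt_toColex_iff_exists_forall_lt]
  refine ⟨a, ha, hau, ?_⟩
  intro b hb _
  have : (b : ℕ) < k := (mem_filter.1 (hu.1 hb)).2
  rw [Fin.lt_def]
  omega

/-- Key lemma over `Fin n`: the shadow of a family of `r`-sets, `r ≥ 2`, has at least
`min |𝒜| (C(2r-1, r) + 1)` elements. -/
lemma key_fin {n r : ℕ} (hr : 2 ≤ r) {𝒜 : Finset (Finset (Fin n))}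
    (h𝒜 : ∀ s ∈ 𝒜, #s = r) :
    min #𝒜 ((2 * r - 1).choose r + 1) ≤ #(∂ 𝒜) := by
  classical
  have hsized : (𝒜 : Set (Finset (Fin n))).Sized r := fun s hs => h𝒜 s hs
  have hsub : 𝒜 ⊆ powersetCard r (univ : Finset (Fin n)) :=
    fun s hs => mem_powersetCard.2 ⟨subset_univ _, h𝒜 s hs⟩
  rcases le_or_gt #𝒜 ((2 * r - 1).choose r) with hle | hlt
  · refine le_trans (min_le_left _ _) ?_
    obtain ⟨𝒞, hinit, hcard⟩ := exists_isInitSeg n r #𝒜 (card_le_card hsub)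
    have hkk : #(∂ 𝒞) ≤ #(∂ 𝒜) := kruskal_katona hsized (le_of_eq hcard) hinit
    suffices h : #𝒞 ≤ #(∂ 𝒞) by omega
    by_cases hall : ∀ t ∈ 𝒞, t ⊆ W n (2 * r - 1)
    · exact card_le_card_shadow (by omega) (card_W_le n (2 * r - 1))
        (fun s hs => ⟨hall s hs, hinit.1 hs⟩)
    · exfalso
      push_neg at hall
      obtain ⟨t, ht, htW⟩ := hall
      obtain ⟨a, hat, haW⟩ := not_subset.1 htW
      have hka : 2 * r - 1 ≤ (a : ℕ) := by
        by_contra h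
        exact haW (mem_filter.2 ⟨mem_univ _, by omega⟩)
      have hkn : 2 * r - 1 ≤ n := le_trans hka (le_of_lt a.isLt)
      have hfull := full_level_subset hinit ht hat hka
      have htP : t ∉ powersetCard r (W n (2 * r - 1)) := by
        intro h
        exact haW ((mem_powersetCard.1 h).1 hat)
      have : #(insert t (powersetCard r (W n (2 * r - 1)))) ≤ #𝒞 :=
        card_le_card (insert_subset ht hfull)
      rw [card_insert_of_notMem htP, card_powersetCard, card_W n _ hkn] at this
      omega
  · refine le_trans (min_le_right _ _) ?_
    have hBn : (2 * r - 1).choose r + 1 ≤ #(powersetCard r (univ : Finset (Fin n))) :=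
      le_trans (by omega) (card_le_card hsub)
    obtain ⟨𝒞, hinit, hcard⟩ := exists_isInitSeg n r ((2 * r - 1).choose r + 1) hBn
    have hkk : #(∂ 𝒞) ≤ #(∂ 𝒜) := kruskal_katona hsized (by omega) hinit
    suffices h : (2 * r - 1).choose r + 1 ≤ #(∂ 𝒞) by omega
    have hex : ∃ t ∈ 𝒞, ¬ t ⊆ W n (2 * r - 1) := by
      by_contra hall
      push_neg at hall
      have : 𝒞 ⊆ powersetCard r (W n (2 * r - 1)) :=
        fun s hs => mem_powersetCard.2 ⟨hall s hs, hinit.1 hs⟩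
      have h1 : #𝒞 ≤ (#(W n (2 * r - 1))).choose r := by
        calc #𝒞 ≤ #(powersetCard r (W n (2 * r - 1))) := card_le_card this
          _ = _ := card_powersetCard _ _
      have h2 : (#(W n (2 * r - 1))).choose r ≤ (2 * r - 1).choose r :=
        Nat.choose_le_choose r (card_W_le n _)
      omega
    obtain ⟨t, ht, htW⟩ := hex
    obtain ⟨a, hat, haW⟩ := not_subset.1 htW
    have hka : 2 * r - 1 ≤ (a : ℕ) := by
      by_contra h
      exact haW (mem_filter.2 ⟨mem_univ _, by omega⟩)
    have hkn : 2 * r - 1 ≤ n := le_trans hka (le_of_lt a.isLt)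
    have hfull := full_level_subset hinit ht hat hka
    have hWcard : #(W n (2 * r - 1)) = 2 * r - 1 := card_W n _ hkn
    -- the full (r-1)-level of W is in the shadow
    have hP' : powersetCard (r - 1) (W n (2 * r - 1)) ⊆ ∂ 𝒞 := by
      intro u hu
      rw [mem_powersetCard] at hu
      obtain ⟨v, huv, hvW, hv⟩ := exists_subsuperset_card_eq hu.1 (by omega)
        (by omega : r ≤ #(W n (2 * r - 1)))
      have hv𝒞 : v ∈ 𝒞 := hfull (mem_powersetCard.2 ⟨hvW, hv⟩)
      rw [mem_shadow_iff_exists_mem_card_add_one]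
      exact ⟨v, hv𝒞, huv, by omega⟩
    -- an extra shadow element containing a
    have htr : #t = r := hinit.1 ht
    have hbne : (t.erase a).Nonempty := by
      rw [← card_pos, card_erase_of_mem hat]
      omega
    obtain ⟨b, hb⟩ := hbne
    have hbt : b ∈ t := mem_of_mem_erase hb
    have hba : b ≠ a := ne_of_mem_erase hb
    have hT : t.erase b ∈ ∂ 𝒞 := erase_mem_shadow ht hbt
    have haT : a ∈ t.erase b := mem_erase.2 ⟨fun h => hba h.symm, hat⟩
    have hTP : t.erase b ∉ powersetCard (r - 1) (W n (2 * r - 1)) := by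
      intro h
      exact haW ((mem_powersetCard.1 h).1 haT)
    have hins : insert (t.erase b) (powersetCard (r - 1) (W n (2 * r - 1))) ⊆ ∂ 𝒞 :=
      insert_subset hT hP'
    have hcalc : (2 * r - 1).choose (r - 1) + 1 ≤ #(∂ 𝒞) := by
      calc (2 * r - 1).choose (r - 1) + 1
          = #(insert (t.erase b) (powersetCard (r - 1) (W n (2 * r - 1)))) := by
            rw [card_insert_of_notMem hTP, card_powersetCard, hWcard]
        _ ≤ #(∂ 𝒞) := card_le_card hins
    have hsymm : (2 * r - 1).choose (r - 1) = (2 * r - 1).choose r := by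
      rw [← Nat.choose_symm (by omega : r ≤ 2 * r - 1)]
      congr 1
      omega
    omega

/-- Key lemma over an arbitrary type. -/
lemma key {r : ℕ} (hr : 2 ≤ r) {𝒜 : Finset (Finset α)}
    (h𝒜 : ∀ s ∈ 𝒜, #s = r) :
    min #𝒜 ((2 * r - 1).choose r + 1) ≤ #(∂ 𝒜) := by
  classical
  rcases 𝒜.eq_empty_or_nonempty with rfl | ⟨s₀, hs₀⟩
  · simp
  set V : Finset α := 𝒜.sup id with hV
  have hVs : ∀ s ∈ 𝒜, s ⊆ V := fun s hs => le_sup (f := id) hs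
  have hV0 : V.Nonempty := by
    have : s₀.Nonempty := by
      rw [← card_pos, h𝒜 s₀ hs₀]; omega
    obtain ⟨x, hx⟩ := this
    exact ⟨x, hVs s₀ hs₀ hx⟩
  obtain ⟨v₀, hv₀⟩ := hV0
  set n := #V with hn
  set e := V.equivFin with he
  set f : α → Fin n := fun a => if h : a ∈ V then e ⟨a, h⟩ else e ⟨v₀, hv₀⟩ with hf
  have hfinj : Set.InjOn f V := by
    intro a ha b hb hab
    have ha' : a ∈ V := ha
    have hb' : b ∈ V := hb
    rw [hf] at hab
    simp only [dif_pos ha', dif_pos hb'] at hab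
    exact Subtype.ext_iff.1 (e.injective hab)
  set g : Finset α → Finset (Fin n) := fun s => s.image f with hg
  have hgcard : ∀ s ∈ 𝒜, #(g s) = #s :=
    fun s hs => card_image_of_injOn (hfinj.mono (hVs s hs))
  set 𝒜' := 𝒜.image g with h𝒜'
  have hginj : ∀ s ∈ 𝒜, ∀ t ∈ 𝒜, g s = g t → s = t := by
    intro s hs t ht hst
    apply Finset.Subset.antisymm
    · intro a ha
      have : f a ∈ g t := hst ▸ mem_image_of_mem f ha
      obtain ⟨b, hb, hba⟩ := mem_image.1 this
      have : b = a := hfinj (hVs t ht hb) (hVs s hs ha) hba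
      exact this ▸ hb
    · intro a ha
      have : f a ∈ g s := hst ▸ mem_image_of_mem f ha
      obtain ⟨b, hb, hba⟩ := mem_image.1 this
      have : b = a := hfinj (hVs s hs hb) (hVs t ht ha) hba
      exact this ▸ hb
  have hcard' : #𝒜' = #𝒜 := card_image_of_injOn hginj
  have hsized' : ∀ s' ∈ 𝒜', #s' = r := by
    intro s' hs'
    obtain ⟨s, hs, rfl⟩ := mem_image.1 hs'
    rw [hgcard s hs, h𝒜 s hs]
  have hkey := key_fin hr hsized'
  have hshadow : ∂ 𝒜' ⊆ (∂ 𝒜).image g := by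
    intro t' ht'
    obtain ⟨s', hs', a', ha', rfl⟩ := mem_shadow_iff.1 ht'
    obtain ⟨s, hs, rfl⟩ := mem_image.1 hs'
    obtain ⟨a, ha, rfl⟩ := mem_image.1 ha'
    have herase : (g s).erase (f a) = g (s.erase a) := by
      apply Finset.Subset.antisymm
      · intro x hx
        obtain ⟨hxne, hxg⟩ := mem_erase.1 hx
        obtain ⟨y, hy, rfl⟩ := mem_image.1 hxg
        have hya : y ≠ a := by
          rintro rfl
          exact hxne rfl
        exact mem_image_of_mem f (mem_erase.2 ⟨hya, hy⟩)
      · intro x hx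
        obtain ⟨y, hy, rfl⟩ := mem_image.1 hx
        obtain ⟨hya, hys⟩ := mem_erase.1 hy
        refine mem_erase.2 ⟨?_, mem_image_of_mem f hys⟩
        intro h
        exact hya (hfinj (hVs s hs hys) (hVs s hs ha) h)
    rw [herase]
    exact mem_image_of_mem g (erase_mem_shadow hs ha)
  have hfinal : #(∂ 𝒜') ≤ #(∂ 𝒜) :=
    le_trans (card_le_card hshadow) card_image_le
  rw [hcard'] at hkey
  exact le_trans hkey hfinal

lemma choose_central_mono : ∀ {a b : ℕ}, a ≤ b → (2 * a + 1).choose a ≤ (2 * b + 1).choose b := by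
  intro a b hab
  induction b, hab using Nat.le_induction with
  | base => exact le_refl _
  | succ k hk ih =>
    refine le_trans ih ?_
    have h1 : (2 * k + 1).choose k ≤ (2 * k + 2).choose (k + 1) := by
      rw [Nat.choose_succ_succ (2 * k + 1) k]
      omega
    have h2 : (2 * k + 2).choose (k + 1) ≤ (2 * (k + 1) + 1).choose (k + 1) :=
      Nat.choose_le_choose (k + 1) (by omega)
    exact le_trans h1 h2

/-- The cascade of shadows. -/
def casc (ℰ : Finset (Finset α)) (c : ℕ) : ℕ → Finset (Finset α)
  | 0 => ℰ.filter fun E => #E = 2 * c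
  | (j + 1) => ∂ (casc ℰ c j) ∪ ℰ.filter fun E => #E = 2 * c - (j + 1)

lemma casc_invar (c : ℕ) (hc : 1 ≤ c) (ℰ : Finset (Finset α))
    (hcard : ∀ E ∈ ℰ, c ≤ #E) (hle : ∀ E ∈ ℰ, #E ≤ 2 * c)
    (hclutter : ∀ E ∈ ℰ, ∀ F ∈ ℰ, E ⊆ F → E = F) :
    ∀ j, j ≤ c →
      (∀ S ∈ casc ℰ c j, #S = 2 * c - j ∧ ∃ E ∈ ℰ, S ⊆ E) ∧
      min #(ℰ.filter fun E => 2 * c - j ≤ #E) ((2 * c + 1).choose c + 1) ≤ #(casc ℰ c j) := by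
  intro j
  induction j with
  | zero =>
    intro _
    constructor
    · intro S hS
      rw [show casc ℰ c 0 = ℰ.filter (fun E => #E = 2 * c) from rfl, mem_filter] at hS
      exact ⟨hS.2, S, hS.1, Finset.Subset.refl S⟩
    · have heq : (ℰ.filter fun E => 2 * c - 0 ≤ #E) = ℰ.filter fun E => #E = 2 * c := by
        apply filter_congr
        intro E hE
        have := hle E hE
        omega
      rw [heq, show casc ℰ c 0 = ℰ.filter (fun E => #E = 2 * c) from rfl]
      exact min_le_left _ _
  | succ j ih =>
    intro hj1
    obtain ⟨IH1, IH2⟩ := ih (by omega)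
    set r := 2 * c - j with hrdef
    have hr2 : 2 ≤ r := by omega
    have mem1 : ∀ S ∈ casc ℰ c (j + 1), #S = 2 * c - (j + 1) ∧ ∃ E ∈ ℰ, S ⊆ E := by
      intro S hS
      rw [show casc ℰ c (j+1) = ∂ (casc ℰ c j) ∪ ℰ.filter (fun E => #E = 2 * c - (j + 1)) from rfl, mem_union] at hS
      rcases hS with hS | hS
      · obtain ⟨s, hs, hSs, hcs⟩ := mem_shadow_iff_exists_mem_card_add_one.1 hS
        obtain ⟨hscard, E, hE, hsE⟩ := IH1 s hs
        exact ⟨by omega, E, hE, hSs.trans hsE⟩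
      · rw [mem_filter] at hS
        exact ⟨hS.2, S, hS.1, Finset.Subset.refl S⟩
    refine ⟨mem1, ?_⟩
    have hdisj : Disjoint (∂ (casc ℰ c j)) (ℰ.filter fun E => #E = 2 * c - (j + 1)) := by
      rw [disjoint_left]
      intro T hT hTf
      obtain ⟨s, hs, hTs, hcs⟩ := mem_shadow_iff_exists_mem_card_add_one.1 hT
      obtain ⟨hscard, E, hE, hsE⟩ := IH1 s hs
      have hTℰ : T ∈ ℰ := (mem_filter.1 hTf).1
      have hTE : T = E := hclutter T hTℰ E hE (hTs.trans hsE)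
      have : s ⊆ T := hTE ▸ hsE
      have : #s ≤ #T := card_le_card this
      omega
    have hcunion : #(casc ℰ c (j + 1)) =
        #(∂ (casc ℰ c j)) + #(ℰ.filter fun E => #E = 2 * c - (j + 1)) := by
      rw [show casc ℰ c (j+1) = ∂ (casc ℰ c j) ∪ ℰ.filter (fun E => #E = 2 * c - (j + 1)) from rfl, card_union_of_disjoint hdisj]
    -- apply the key lemma at level r
    have hsz : ∀ s ∈ casc ℰ c j, #s = r := fun s hs => (IH1 s hs).1
    have hkey := key hr2 hsz
    -- (2r-1).choose r ≥ (2c+1).choose c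
    have hmono : (2 * c + 1).choose c ≤ (2 * r - 1).choose r := by
      have h0 : (2 * c + 1).choose c ≤ (2 * (r - 1) + 1).choose (r - 1) :=
        choose_central_mono (by omega : c ≤ r - 1)
      have he2 : (2 * r - 1).choose (r - 1) = (2 * r - 1).choose r := by
        rw [← Nat.choose_symm (by omega : r ≤ 2 * r - 1)]
        congr 1
        omega
      rw [(by omega : 2 * (r - 1) + 1 = 2 * r - 1)] at h0
      omega
    have hstep : min (#(casc ℰ c j)) ((2 * c + 1).choose c + 1) ≤ #(∂ (casc ℰ c j)) := by
      exact le_trans (min_le_min (le_refl (#(casc ℰ c j)))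
        (by omega : (2 * c + 1).choose c + 1 ≤ (2 * r - 1).choose r + 1)) hkey
    -- counting the filters
    have hsplit : #(ℰ.filter fun E => 2 * c - (j + 1) ≤ #E) =
        #(ℰ.filter fun E => #E = 2 * c - (j + 1)) + #(ℰ.filter fun E => 2 * c - j ≤ #E) := by
      have heq : (ℰ.filter fun E => 2 * c - (j + 1) ≤ #E) =
          (ℰ.filter fun E => #E = 2 * c - (j + 1)) ∪ (ℰ.filter fun E => 2 * c - j ≤ #E) := by
        rw [← filter_or]
        apply filter_congr
        intro E hE
        omega
      rw [heq, card_union_of_disjoint]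
      rw [disjoint_left]
      intro E hE1 hE2
      have h1 := (mem_filter.1 hE1).2
      have h2 := (mem_filter.1 hE2).2
      omega
    have hD : min #(ℰ.filter fun E => 2 * c - j ≤ #E) ((2 * c + 1).choose c + 1)
        ≤ #(∂ (casc ℰ c j)) :=
      le_trans (le_min IH2 (min_le_right _ _)) hstep
    rcases le_total #(ℰ.filter fun E => 2 * c - j ≤ #E) ((2 * c + 1).choose c + 1) with h | h
    · rw [min_eq_left h] at hD
      have := min_le_left (#(ℰ.filter fun E => 2 * c - (j + 1) ≤ #E)) ((2 * c + 1).choose c + 1)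
      omega
    · rw [min_eq_right h] at hD
      have := min_le_right (#(ℰ.filter fun E => 2 * c - (j + 1) ≤ #E)) ((2 * c + 1).choose c + 1)
      omega

end Stmt13Aux

open Stmt13Aux

theorem stmt_13 {α : Type*} [DecidableEq α] (c : ℕ) (hc : 1 ≤ c)
    (ℰ : Finset (Finset α)) (hcard : ∀ E ∈ ℰ, c ≤ E.card)
    (hclutter : ∀ E ∈ ℰ, ∀ F ∈ ℰ, E ⊆ F → E = F) :
    min ℰ.card ((2 * c + 1).choose c + 1)
      ≤ (ℰ.biUnion fun E => E.powersetCard c).card := by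
  classical
  set D := ℰ.biUnion fun E => E.powersetCard c with hD
  by_cases hsmall : #ℰ ≤ 1
  · rcases ℰ.eq_empty_or_nonempty with rfl | ⟨E, hE⟩
    · simp
    · obtain ⟨S, hSE, hSc⟩ := exists_subset_card_eq (hcard E hE)
      have hSD : S ∈ D := mem_biUnion.2 ⟨E, hE, mem_powersetCard.2 ⟨hSE, hSc⟩⟩
      have : 1 ≤ #D := card_pos.2 ⟨S, hSD⟩
      have : min #ℰ ((2 * c + 1).choose c + 1) ≤ #ℰ := min_le_left _ _
      omega
  by_cases hbig : ∃ E ∈ ℰ, 2 * c + 1 ≤ #E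
  · obtain ⟨E, hE, hEc⟩ := hbig
    have h2 : ∃ E' ∈ ℰ, E' ≠ E := by
      by_contra h
      push_neg at h
      have : ℰ ⊆ {E} := fun x hx => mem_singleton.2 (h x hx)
      have := card_le_card this
      simp at this
      omega
    obtain ⟨E', hE', hne⟩ := h2
    have hns : ¬ E' ⊆ E := fun h => hne (hclutter E' hE' E hE h)
    obtain ⟨a, haE', haE⟩ := not_subset.1 hns
    obtain ⟨S, hSa, hSE', hSc⟩ := exists_subsuperset_card_eq
      (singleton_subset_iff.2 haE') (by simpa using hc) (hcard E' hE')
    have hPD : powersetCard c E ⊆ D := fun u hu => mem_biUnion.2 ⟨E, hE, hu⟩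
    have hSD : S ∈ D := mem_biUnion.2 ⟨E', hE', mem_powersetCard.2 ⟨hSE', hSc⟩⟩
    have hSP : S ∉ powersetCard c E :=
      fun h => haE ((mem_powersetCard.1 h).1 (hSa (mem_singleton_self a)))
    have hins : insert S (powersetCard c E) ⊆ D := insert_subset hSD hPD
    have hcount : (#E).choose c + 1 ≤ #D := by
      calc (#E).choose c + 1 = #(insert S (powersetCard c E)) := by
            rw [card_insert_of_notMem hSP, card_powersetCard]
        _ ≤ #D := card_le_card hins
    have hch : (2 * c + 1).choose c ≤ (#E).choose c := Nat.choose_le_choose c hEc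
    have : min #ℰ ((2 * c + 1).choose c + 1) ≤ (2 * c + 1).choose c + 1 := min_le_right _ _
    omega
  · push_neg at hbig
    have hle : ∀ E ∈ ℰ, #E ≤ 2 * c := by
      intro E hE
      have := hbig E hE
      omega
    obtain ⟨mem1, hmin⟩ := casc_invar c hc ℰ hcard hle hclutter c (le_refl c)
    have hfilter : (ℰ.filter fun E => 2 * c - c ≤ #E) = ℰ := by
      apply filter_true_of_mem
      intro E hE
      have := hcard E hE
      omega
    have hsub : casc ℰ c c ⊆ D := by
      intro S hS
      obtain ⟨hScard, E, hE, hSE⟩ := mem1 S hS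
      refine mem_biUnion.2 ⟨E, hE, mem_powersetCard.2 ⟨hSE, ?_⟩⟩
      omega
    have := card_le_card hsub
    rw [hfilter] at hmin
    omega
end

section
/- Counting identity: let X = X₁ ∪ X₂ with X₁, X₂ disjoint of size n/2 each (n even), let c ≥ 1 and 1 ≤ w ≤ ⌊c/2⌋. Define 𝒜 = {A ⊆ X : |A| = c, min(|A∩X₁|, |A∩X₂|) ≥ w} and ℬ = {B ⊆ X : |B| = c+1, min(|B∩X₁|, |B∩X₂|) ≤ w−1}, and let a = |𝒜|, b = |ℬ|. Then (c+1)·b = (n−c)·(C(n,c) − a) − (n − 2w + 2)·C(n/2, w−1)·C(n/2, c−w+1). -/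
/-!
Double count the pairs `S ⊆ B` with `S` a `c`-set outside `𝒜` and `B ∈ ℬ`; both are sets whose
smaller part has at most `k = w - 1` points. Each `B` contributes all `c + 1` of its `c`-subsets.
Each `S` has `n - c` one-point extensions, all in `ℬ` unless `S` meets one half in exactly `k`
points; since `c > 2k` the other half then holds more than `k` points, and the extension leaves
`ℬ` exactly when the new point lands in the small half, which happens in `n/2 - k` ways.
-/

open Finset

section

variable {α : Type*} [DecidableEq α]

lemma card_inter_add_card_inter_of_subset_union {X₁ X₂ S : Finset α} (h : Disjoint X₁ X₂)
    (hS : S ⊆ X₁ ∪ X₂) : #(S ∩ X₁) + #(S ∩ X₂) = #S := by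
  rw [← card_union_of_disjoint (h.mono inter_subset_right inter_subset_right),
    ← inter_union_distrib_left, inter_eq_left.mpr hS]

lemma union_inter_eq_left_of_subset {Y₁ Y₂ A B : Finset α} (h : Disjoint Y₁ Y₂)
    (hA : A ⊆ Y₁) (hB : B ⊆ Y₂) : (A ∪ B) ∩ Y₁ = A := by
  rw [union_inter_distrib_right, inter_eq_left.mpr hA,
    disjoint_iff_inter_eq_empty.mp (h.mono_right hB).symm, union_empty]

lemma card_powersetCard_filter_card_inter_eq {Y₁ Y₂ : Finset α} (h : Disjoint Y₁ Y₂) (k j : ℕ) :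
    #{S ∈ (Y₁ ∪ Y₂).powersetCard (k + j) | #(S ∩ Y₁) = k} = (#Y₁).choose k * (#Y₂).choose j := by
  rw [← card_powersetCard, ← card_powersetCard, ← card_product]
  refine card_nbij' (fun S => (S ∩ Y₁, S ∩ Y₂)) (fun p => p.1 ∪ p.2) ?_ ?_ ?_ ?_
  · intro S hS
    simp only [mem_coe, mem_filter, mem_powersetCard] at hS
    have := card_inter_add_card_inter_of_subset_union h hS.1.1
    simp only [coe_product, Set.mem_prod, mem_coe, mem_powersetCard]
    exact ⟨⟨inter_subset_right, hS.2⟩, inter_subset_right, by omega⟩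
  · rintro ⟨A, B⟩ hAB
    simp only [coe_product, Set.mem_prod, mem_coe, mem_powersetCard] at hAB
    obtain ⟨⟨hA, rfl⟩, hB, rfl⟩ := hAB
    simp only [mem_coe, mem_filter, mem_powersetCard]
    exact ⟨⟨union_subset_union hA hB, card_union_of_disjoint (h.mono hA hB)⟩,
      by rw [union_inter_eq_left_of_subset h hA hB]⟩
  · intro S hS
    simp only [mem_coe, mem_filter, mem_powersetCard] at hS
    simp only [← inter_union_distrib_left, inter_eq_left.mpr hS.1.1]
  · rintro ⟨A, B⟩ hAB
    simp only [coe_product, Set.mem_prod, mem_coe, mem_powersetCard] at hAB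
    simp only [Prod.mk.injEq]
    exact ⟨union_inter_eq_left_of_subset h hAB.1.1 hAB.2.1,
      by rw [union_comm, union_inter_eq_left_of_subset h.symm hAB.2.1 hAB.1.1]⟩

lemma card_filter_superset_powersetCard_card_add_one {X S : Finset α} (hS : S ⊆ X)
    (P : Finset α → Prop) [DecidablePred P] :
    #{B ∈ X.powersetCard (#S + 1) | P B ∧ S ⊆ B} = #{x ∈ X \ S | P (insert x S)} := by
  symm
  refine card_bij (fun x _ => insert x S) ?_ ?_ ?_
  · intro x hx
    simp only [mem_filter, mem_sdiff] at hx
    simp only [mem_filter, mem_powersetCard]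
    exact ⟨⟨insert_subset hx.1.1 hS, card_insert_of_notMem hx.1.2⟩, hx.2, subset_insert x S⟩
  · intro x hx y _ hxy
    have hxS : x ∉ S := (mem_sdiff.mp (mem_filter.mp hx).1).2
    simpa [hxS] using (hxy ▸ mem_insert_self x S : x ∈ insert y S)
  · intro B hB
    simp only [mem_filter, mem_powersetCard] at hB
    obtain ⟨x, hxS, rfl⟩ := exists_eq_insert_iff.mpr ⟨hB.2.2, hB.1.2.symm⟩
    exact ⟨x, mem_filter.mpr ⟨mem_sdiff.mpr ⟨hB.1.1 (mem_insert_self x S), hxS⟩, hB.2.1⟩, rfl⟩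

def minPart (X₁ X₂ S : Finset α) : ℕ := min #(S ∩ X₁) #(S ∩ X₂)

section minPart

variable {X₁ X₂ S : Finset α}

lemma minPart_comm : minPart X₂ X₁ S = minPart X₁ X₂ S := min_comm _ _

lemma minPart_mono {T : Finset α} (h : S ⊆ T) : minPart X₁ X₂ S ≤ minPart X₁ X₂ T :=
  min_le_min (card_le_card (inter_subset_inter_right h)) (card_le_card (inter_subset_inter_right h))

lemma minPart_insert_le (x : α) : minPart X₁ X₂ (insert x S) ≤ minPart X₁ X₂ S + 1 := by
  have key : ∀ Y : Finset α, #(insert x S ∩ Y) ≤ #(S ∩ Y) + 1 := fun Y =>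
    calc #(insert x S ∩ Y) ≤ #(insert x (S ∩ Y)) := by
          rw [insert_inter_distrib]
          exact card_le_card (inter_subset_inter_left (subset_insert x Y))
      _ ≤ #(S ∩ Y) + 1 := card_insert_le _ _
  exact (min_le_min (key X₁) (key X₂)).trans (min_add_add_right _ _ _).le

lemma filter_sdiff_minPart_insert_le {k : ℕ} (h : Disjoint X₁ X₂) (h₁ : #(S ∩ X₁) = k)
    (h₂ : k < #(S ∩ X₂)) :
    {x ∈ (X₁ ∪ X₂) \ S | minPart X₁ X₂ (insert x S) ≤ k} = X₂ \ S := by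
  ext x
  simp only [mem_filter, mem_sdiff, mem_union]
  unfold minPart
  constructor
  · rintro ⟨⟨hx | hx, hxS⟩, hle⟩
    · have : #(insert x S ∩ X₁) = k + 1 := by
        rw [insert_inter_of_mem hx, card_insert_of_notMem (fun h => hxS (mem_inter.1 h).1), h₁]
      have : #(S ∩ X₂) ≤ #(insert x S ∩ X₂) :=
        card_le_card (inter_subset_inter_right (subset_insert x S))
      omega
    · exact ⟨hx, hxS⟩
  · rintro ⟨hx, hxS⟩
    refine ⟨⟨Or.inr hx, hxS⟩, ?_⟩
    rw [insert_inter_of_notMem (disjoint_right.mp h hx), h₁]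
    exact min_le_left _ _

end minPart

def lowFamily (X₁ X₂ : Finset α) (r k : ℕ) : Finset (Finset α) :=
  {S ∈ (X₁ ∪ X₂).powersetCard r | minPart X₁ X₂ S ≤ k}

section lowFamily

variable {X₁ X₂ : Finset α} {m c k : ℕ}

lemma filter_subset_lowFamily_eq_powersetCard {B : Finset α} (hB : B ∈ lowFamily X₁ X₂ (c + 1) k) :
    {S ∈ lowFamily X₁ X₂ c k | S ⊆ B} = B.powersetCard c := by
  simp only [lowFamily, mem_filter, mem_powersetCard] at hB
  ext S
  simp only [lowFamily, mem_filter, mem_powersetCard]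
  constructor
  · rintro ⟨⟨⟨-, hSc⟩, -⟩, hSB⟩
    exact ⟨hSB, hSc⟩
  · rintro ⟨hSB, hSc⟩
    exact ⟨⟨⟨hSB.trans hB.1.1, hSc⟩, (minPart_mono hSB).trans hB.2⟩, hSB⟩

/-- Of the `2m - c` one-point extensions of `S`, exactly `m - k` leave the family when
`minPart S = k` (those adding a point to the part of size `k`), and none otherwise. -/
lemma card_filter_superset_lowFamily_add (h : Disjoint X₁ X₂) (hX₁ : #X₁ = m) (hX₂ : #X₂ = m)
    (hk : 2 * k < c) {S : Finset α} (hS : S ∈ lowFamily X₁ X₂ c k) :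
    #{B ∈ lowFamily X₁ X₂ (c + 1) k | S ⊆ B} + (if minPart X₁ X₂ S = k then m - k else 0)
      = 2 * m - c := by
  simp only [lowFamily, mem_filter, mem_powersetCard] at hS
  obtain ⟨⟨hSX, rfl⟩, hSk⟩ := hS
  have hparts := card_inter_add_card_inter_of_subset_union h hSX
  have hX : #(X₁ ∪ X₂) = 2 * m := by rw [card_union_of_disjoint h, hX₁, hX₂]; ring
  rw [lowFamily, filter_filter, card_filter_superset_powersetCard_card_add_one hSX]
  split_ifs with hbd
  · have hX₁S : #(S ∩ X₁) ≤ m := hX₁ ▸ card_le_card inter_subset_right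
    have hX₂S : #(S ∩ X₂) ≤ m := hX₂ ▸ card_le_card inter_subset_right
    rcases min_choice #(S ∩ X₁) #(S ∩ X₂) with h₁ | h₂
    · have h₁k : #(S ∩ X₁) = k := h₁.symm.trans hbd
      rw [filter_sdiff_minPart_insert_le h h₁k (by omega), card_sdiff, hX₂]
      omega
    · have h₂k : #(S ∩ X₂) = k := h₂.symm.trans hbd
      have e := filter_sdiff_minPart_insert_le h.symm h₂k (by omega)
      simp only [union_comm X₂, minPart_comm] at e
      rw [e, card_sdiff, hX₁]
      omega
  · rw [filter_true_of_mem fun x _ => (minPart_insert_le x).trans (by omega),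
      card_sdiff_of_subset hSX, hX, add_zero]

/-- Double counting the pairs `S ⊆ B` with `S ∈ lowFamily c k` and `B ∈ lowFamily (c + 1) k`. -/
lemma card_lowFamily_succ_mul_add (h : Disjoint X₁ X₂) (hX₁ : #X₁ = m) (hX₂ : #X₂ = m)
    (hk : 2 * k < c) :
    (c + 1) * #(lowFamily X₁ X₂ (c + 1) k)
        + (m - k) * #{S ∈ lowFamily X₁ X₂ c k | minPart X₁ X₂ S = k}
      = (2 * m - c) * #(lowFamily X₁ X₂ c k) := by
  have hpairs := sum_card_bipartiteAbove_eq_sum_card_bipartiteBelow (· ⊆ ·)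
    (s := lowFamily X₁ X₂ c k) (t := lowFamily X₁ X₂ (c + 1) k)
  have hbelow : ∀ B ∈ lowFamily X₁ X₂ (c + 1) k,
      #(bipartiteBelow (· ⊆ ·) (lowFamily X₁ X₂ c k) B) = c + 1 := fun B hB => by
    rw [bipartiteBelow, filter_subset_lowFamily_eq_powersetCard hB, card_powersetCard,
      (mem_powersetCard.mp (mem_filter.mp hB).1).2, Nat.choose_succ_self_right]
  rw [sum_congr rfl hbelow, sum_const, smul_eq_mul] at hpairs
  calc (c + 1) * #(lowFamily X₁ X₂ (c + 1) k)
        + (m - k) * #{S ∈ lowFamily X₁ X₂ c k | minPart X₁ X₂ S = k}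
      = ∑ S ∈ lowFamily X₁ X₂ c k, (#{B ∈ lowFamily X₁ X₂ (c + 1) k | S ⊆ B}
          + if minPart X₁ X₂ S = k then m - k else 0) := by
        rw [sum_add_distrib, ← sum_filter, sum_const, smul_eq_mul]
        simp only [bipartiteAbove] at hpairs
        rw [hpairs, mul_comm, mul_comm (m - k)]
    _ = ∑ S ∈ lowFamily X₁ X₂ c k, (2 * m - c) :=
        sum_congr rfl fun S hS => card_filter_superset_lowFamily_add h hX₁ hX₂ hk hS
    _ = (2 * m - c) * #(lowFamily X₁ X₂ c k) := by rw [sum_const, smul_eq_mul, mul_comm]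

lemma card_filter_lowFamily_minPart_eq (h : Disjoint X₁ X₂) (hX₁ : #X₁ = m) (hX₂ : #X₂ = m)
    (hk : 2 * k < c) :
    #{S ∈ lowFamily X₁ X₂ c k | minPart X₁ X₂ S = k} = 2 * (m.choose k * m.choose (c - k)) := by
  have hc : c = k + (c - k) := by omega
  have hsplit : {S ∈ lowFamily X₁ X₂ c k | minPart X₁ X₂ S = k}
      = {S ∈ (X₁ ∪ X₂).powersetCard c | #(S ∩ X₁) = k}
        ∪ {S ∈ (X₁ ∪ X₂).powersetCard c | #(S ∩ X₂) = k} := by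
    ext S
    simp only [lowFamily, filter_filter, mem_union, mem_filter, mem_powersetCard]
    unfold minPart
    constructor
    · rintro ⟨⟨hSX, rfl⟩, -, hmin⟩
      rcases min_choice #(S ∩ X₁) #(S ∩ X₂) with h₁ | h₂ <;> grind
    · have := card_inter_add_card_inter_of_subset_union h (S := S)
      grind
  have hdisj : Disjoint {S ∈ (X₁ ∪ X₂).powersetCard c | #(S ∩ X₁) = k}
      {S ∈ (X₁ ∪ X₂).powersetCard c | #(S ∩ X₂) = k} := by
    refine disjoint_filter.mpr fun S hS h₁ h₂ => ?_
    have := card_inter_add_card_inter_of_subset_union h (mem_powersetCard.mp hS).1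
    have := (mem_powersetCard.mp hS).2
    omega
  have hcount₂ := card_powersetCard_filter_card_inter_eq h.symm k (c - k)
  rw [union_comm X₂, ← hc, hX₁, hX₂] at hcount₂
  rw [hsplit, card_union_of_disjoint hdisj, hc, card_powersetCard_filter_card_inter_eq h,
    ← hc, hcount₂, hX₁, hX₂]
  ring

end lowFamily

end

theorem stmt_14_general {α : Type*} [DecidableEq α] (n c w : ℕ) (hev : Even n)
    (hw1 : 1 ≤ w) (hw2 : w ≤ c / 2) (hn : 2 * (c + 1) ≤ n)
    (X₁ X₂ : Finset α) (hdisj : Disjoint X₁ X₂)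
    (hX₁ : X₁.card = n / 2) (hX₂ : X₂.card = n / 2)
    (𝒜 ℬ : Finset (Finset α))
    (h𝒜 : 𝒜 = ((X₁ ∪ X₂).powersetCard c).filter
      (fun A => w ≤ min (A ∩ X₁).card (A ∩ X₂).card))
    (hℬ : ℬ = ((X₁ ∪ X₂).powersetCard (c + 1)).filter
      (fun B => min (B ∩ X₁).card (B ∩ X₂).card ≤ w - 1)) :
    ((c : ℤ) + 1) * ℬ.card
      = ((n : ℤ) - c) * ((n.choose c : ℤ) - 𝒜.card)
        - ((n : ℤ) - 2 * w + 2) * ((n / 2).choose (w - 1) : ℤ)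
          * ((n / 2).choose (c - w + 1) : ℤ) := by
  obtain ⟨m, rfl⟩ := hev
  rw [show (m + m) / 2 = m by omega] at hX₁ hX₂ ⊢
  have hk : 2 * (w - 1) < c := by omega
  have hℬ : ℬ = lowFamily X₁ X₂ (c + 1) (w - 1) := hℬ
  have h𝒜 : 𝒜 = {A ∈ (X₁ ∪ X₂).powersetCard c | ¬ minPart X₁ X₂ A ≤ w - 1} := by
    rw [h𝒜]
    exact filter_congr fun A _ => by unfold minPart; omega
  have hcard𝒜 : #(lowFamily X₁ X₂ c (w - 1)) + #𝒜 = (m + m).choose c := by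
    rw [h𝒜, lowFamily, card_filter_add_card_filter_not, card_powersetCard,
      card_union_of_disjoint hdisj, hX₁, hX₂]
  have hcount := card_lowFamily_succ_mul_add hdisj hX₁ hX₂ hk
  rw [card_filter_lowFamily_minPart_eq hdisj hX₁ hX₂ hk, ← hℬ,
    show c - (w - 1) = c - w + 1 by omega] at hcount
  zify [show w - 1 ≤ m by omega, show c ≤ 2 * m by omega, hw1] at hcount hcard𝒜
  push_cast
  linear_combination hcount + ((m : ℤ) + m - c) * hcard𝒜

theorem stmt_14 {α : Type*} [DecidableEq α] (n c w : ℕ) (hev : Even n)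
    (hc : 1 ≤ c) (hw1 : 1 ≤ w) (hw2 : w ≤ c / 2) (hn : 2 * (c + 1) ≤ n)
    (X₁ X₂ : Finset α) (hdisj : Disjoint X₁ X₂)
    (hX₁ : X₁.card = n / 2) (hX₂ : X₂.card = n / 2)
    (𝒜 ℬ : Finset (Finset α))
    (h𝒜 : 𝒜 = ((X₁ ∪ X₂).powersetCard c).filter
      (fun A => w ≤ min (A ∩ X₁).card (A ∩ X₂).card))
    (hℬ : ℬ = ((X₁ ∪ X₂).powersetCard (c + 1)).filter
      (fun B => min (B ∩ X₁).card (B ∩ X₂).card ≤ w - 1)) :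
    ((c : ℤ) + 1) * ℬ.card
      = ((n : ℤ) - c) * ((n.choose c : ℤ) - 𝒜.card)
        - ((n : ℤ) - 2 * w + 2) * ((n / 2).choose (w - 1) : ℤ)
          * ((n / 2).choose (c - w + 1) : ℤ) :=
  stmt_14_general n c w hev hw1 hw2 hn X₁ X₂ hdisj hX₁ hX₂ 𝒜 ℬ h𝒜 hℬ
end

section
/- Counting identity (second construction): let X = X₁ ∪ X₂ with X₁, X₂ disjoint of size n/2 each (n even), let c be odd with (c+1)/2 ≤ w ≤ c−1 and n ≥ 2(c+1). Define 𝒜 = {A ⊆ X : |A| = c, max(|A∩X₁|, |A∩X₂|) ≥ w+1} and ℬ = {B ⊆ X : |B| = c+1, max(|B∩X₁|, |B∩X₂|) ≤ w}, with a = |𝒜|, b = |ℬ|. Then (c+1)·b = (n−c)·(C(n,c) − a) − (n − 2w)·C(n/2, w)·C(n/2, c−w). -/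
open Finset

private lemma split_card' {α : Type*} [DecidableEq α] {Y₁ Y₂ S : Finset α}
    (hd : Disjoint Y₁ Y₂) (hS : S ⊆ Y₁ ∪ Y₂) :
    (S ∩ Y₁).card + (S ∩ Y₂).card = S.card := by
  rw [← card_union_of_disjoint (hd.mono inter_subset_right inter_subset_right),
    ← inter_union_distrib_left, inter_eq_left.mpr hS]

private lemma count_eq' {α : Type*} [DecidableEq α] {Y₁ Y₂ : Finset α}
    (hd : Disjoint Y₁ Y₂) {c k : ℕ} (hk : k ≤ c) :
    (((Y₁ ∪ Y₂).powersetCard c).filter (fun S => (S ∩ Y₁).card = k)).card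
      = Y₁.card.choose k * Y₂.card.choose (c - k) := by
  rw [← card_powersetCard, ← card_powersetCard, ← card_product]
  apply card_nbij' (fun S => (S ∩ Y₁, S ∩ Y₂)) (fun p => p.1 ∪ p.2)
  · intro S hS
    obtain ⟨hS1, hS2⟩ := mem_filter.mp hS
    obtain ⟨hsub, hcard⟩ := mem_powersetCard.mp hS1
    have h := split_card' hd hsub
    exact mem_product.mpr ⟨mem_powersetCard.mpr ⟨inter_subset_right, hS2⟩,
      mem_powersetCard.mpr ⟨inter_subset_right, show (S ∩ Y₂).card = c - k by omega⟩⟩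
  · intro p hp
    obtain ⟨h1, h2⟩ := mem_product.mp hp
    obtain ⟨h1s, h1c⟩ := mem_powersetCard.mp h1
    obtain ⟨h2s, h2c⟩ := mem_powersetCard.mp h2
    have hd' : Disjoint p.1 p.2 := hd.mono h1s h2s
    have e1 : (p.1 ∪ p.2) ∩ Y₁ = p.1 := by
      rw [union_inter_distrib_right, inter_eq_left.mpr h1s,
        disjoint_iff_inter_eq_empty.mp (hd.symm.mono_left h2s), union_empty]
    refine mem_filter.mpr ⟨mem_powersetCard.mpr ⟨union_subset
      (h1s.trans subset_union_left) (h2s.trans subset_union_right), ?_⟩, ?_⟩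
    · rw [card_union_of_disjoint hd', h1c, h2c]; omega
    · rw [e1, h1c]
  · intro S hS
    obtain ⟨hS1, _⟩ := mem_filter.mp hS
    obtain ⟨hsub, _⟩ := mem_powersetCard.mp hS1
    show S ∩ Y₁ ∪ S ∩ Y₂ = S
    rw [← inter_union_distrib_left, inter_eq_left.mpr hsub]
  · intro p hp
    obtain ⟨h1, h2⟩ := mem_product.mp hp
    obtain ⟨h1s, _⟩ := mem_powersetCard.mp h1
    obtain ⟨h2s, _⟩ := mem_powersetCard.mp h2
    have e1 : (p.1 ∪ p.2) ∩ Y₁ = p.1 := by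
      rw [union_inter_distrib_right, inter_eq_left.mpr h1s,
        disjoint_iff_inter_eq_empty.mp (hd.symm.mono_left h2s), union_empty]
    have e2 : (p.1 ∪ p.2) ∩ Y₂ = p.2 := by
      rw [union_inter_distrib_right, inter_eq_left.mpr h2s,
        disjoint_iff_inter_eq_empty.mp (hd.mono_left h1s), empty_union]
    show ((p.1 ∪ p.2) ∩ Y₁, (p.1 ∪ p.2) ∩ Y₂) = p
    rw [e1, e2]

private lemma ext_count' {α : Type*} [DecidableEq α] {X₁ X₂ S : Finset α}
    (hdisj : Disjoint X₁ X₂) {c w : ℕ}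
    (hsub : S ⊆ X₁ ∪ X₂) (hcard : S.card = c) :
    ((((X₁ ∪ X₂).powersetCard (c + 1)).filter
        (fun B => max (B ∩ X₁).card (B ∩ X₂).card ≤ w)).filter (fun B => S ⊆ B)).card
      = (if (S ∩ X₁).card + 1 ≤ w ∧ (S ∩ X₂).card ≤ w then X₁.card - (S ∩ X₁).card else 0)
      + (if (S ∩ X₂).card + 1 ≤ w ∧ (S ∩ X₁).card ≤ w then X₂.card - (S ∩ X₂).card else 0) := by
  classical
  set T₁ : Finset α :=
    if (S ∩ X₁).card + 1 ≤ w ∧ (S ∩ X₂).card ≤ w then X₁ \ S else ∅ with hT₁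
  set T₂ : Finset α :=
    if (S ∩ X₂).card + 1 ≤ w ∧ (S ∩ X₁).card ≤ w then X₂ \ S else ∅ with hT₂
  have hT₁sub : T₁ ⊆ X₁ \ S := by rw [hT₁]; split_ifs <;> simp
  have hT₂sub : T₂ ⊆ X₂ \ S := by rw [hT₂]; split_ifs <;> simp
  have hmem : ∀ x, x ∉ S → (insert x S ∈ ((X₁ ∪ X₂).powersetCard (c + 1)).filter
      (fun B => max (B ∩ X₁).card (B ∩ X₂).card ≤ w) ↔ x ∈ T₁ ∪ T₂) := by
    intro x hxS
    constructor
    · intro hB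
      obtain ⟨hB1, hBw⟩ := mem_filter.mp hB
      obtain ⟨hBX, hBc⟩ := mem_powersetCard.mp hB1
      have hx : x ∈ X₁ ∪ X₂ := hBX (mem_insert_self x S)
      rcases mem_union.mp hx with hx1 | hx2
      · apply mem_union_left
        have e1 : insert x S ∩ X₁ = insert x (S ∩ X₁) := insert_inter_of_mem hx1
        have e2 : insert x S ∩ X₂ = S ∩ X₂ :=
          insert_inter_of_notMem (disjoint_left.mp hdisj hx1)
        rw [e1, e2, max_le_iff,
          card_insert_of_notMem (fun h => hxS (mem_of_mem_inter_left h))] at hBw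
        rw [hT₁, if_pos hBw]
        exact mem_sdiff.mpr ⟨hx1, hxS⟩
      · apply mem_union_right
        have e1 : insert x S ∩ X₂ = insert x (S ∩ X₂) := insert_inter_of_mem hx2
        have e2 : insert x S ∩ X₁ = S ∩ X₁ :=
          insert_inter_of_notMem (disjoint_right.mp hdisj hx2)
        rw [e1, e2, max_le_iff,
          card_insert_of_notMem (fun h => hxS (mem_of_mem_inter_left h))] at hBw
        rw [hT₂, if_pos ⟨hBw.2, hBw.1⟩]
        exact mem_sdiff.mpr ⟨hx2, hxS⟩
    · intro hxT
      rcases mem_union.mp hxT with hx1 | hx2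
      · rw [hT₁] at hx1
        by_cases hc1 : (S ∩ X₁).card + 1 ≤ w ∧ (S ∩ X₂).card ≤ w
        · rw [if_pos hc1] at hx1
          obtain ⟨hxX1, hxS'⟩ := mem_sdiff.mp hx1
          refine mem_filter.mpr ⟨mem_powersetCard.mpr ⟨?_, ?_⟩, ?_⟩
          · exact insert_subset (mem_union_left _ hxX1) hsub
          · rw [card_insert_of_notMem hxS, hcard]
          · rw [insert_inter_of_mem hxX1,
              insert_inter_of_notMem (disjoint_left.mp hdisj hxX1), max_le_iff,
              card_insert_of_notMem (fun h => hxS (mem_of_mem_inter_left h))]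
            exact hc1
        · rw [if_neg hc1] at hx1; exact absurd hx1 (notMem_empty x)
      · rw [hT₂] at hx2
        by_cases hc2 : (S ∩ X₂).card + 1 ≤ w ∧ (S ∩ X₁).card ≤ w
        · rw [if_pos hc2] at hx2
          obtain ⟨hxX2, hxS'⟩ := mem_sdiff.mp hx2
          refine mem_filter.mpr ⟨mem_powersetCard.mpr ⟨?_, ?_⟩, ?_⟩
          · exact insert_subset (mem_union_right _ hxX2) hsub
          · rw [card_insert_of_notMem hxS, hcard]
          · rw [insert_inter_of_mem hxX2,
              insert_inter_of_notMem (disjoint_right.mp hdisj hxX2), max_le_iff,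
              card_insert_of_notMem (fun h => hxS (mem_of_mem_inter_left h))]
            exact ⟨hc2.2, hc2.1⟩
        · rw [if_neg hc2] at hx2; exact absurd hx2 (notMem_empty x)
  have hnotS : ∀ x ∈ T₁ ∪ T₂, x ∉ S := by
    intro x hx
    rcases mem_union.mp hx with h | h
    · exact (mem_sdiff.mp (hT₁sub h)).2
    · exact (mem_sdiff.mp (hT₂sub h)).2
  have himg : (((X₁ ∪ X₂).powersetCard (c + 1)).filter
      (fun B => max (B ∩ X₁).card (B ∩ X₂).card ≤ w)).filter (fun B => S ⊆ B)
      = (T₁ ∪ T₂).image (fun x => insert x S) := by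
    ext B
    constructor
    · intro hBm
      obtain ⟨hB, hSB⟩ := mem_filter.mp hBm
      have hBc : B.card = c + 1 := (mem_powersetCard.mp (mem_filter.mp hB).1).2
      have h1 : (B \ S).card = 1 := by rw [card_sdiff_of_subset hSB, hBc, hcard]; omega
      obtain ⟨x, hx⟩ := card_eq_one.mp h1
      have hxB : x ∈ B \ S := hx ▸ mem_singleton_self x
      have hxS : x ∉ S := (mem_sdiff.mp hxB).2
      have hBeq : insert x S = B :=
        eq_of_subset_of_card_le (insert_subset (mem_sdiff.mp hxB).1 hSB)
          (by rw [card_insert_of_notMem hxS, hcard, hBc])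
      exact mem_image.mpr ⟨x, (hmem x hxS).mp (hBeq ▸ hB), hBeq⟩
    · intro h
      obtain ⟨x, hxT, rfl⟩ := mem_image.mp h
      exact mem_filter.mpr ⟨(hmem x (hnotS x hxT)).mpr hxT, subset_insert x S⟩
  have hinj : Set.InjOn (fun x => insert x S) (T₁ ∪ T₂ : Finset α) := by
    intro x hx y hy h
    simp only at h
    have hxS : x ∉ S := hnotS x hx
    have : x ∈ insert y S := h ▸ mem_insert_self x S
    rcases mem_insert.mp this with h' | h'
    · exact h'
    · exact absurd h' hxS
  have hTdisj : Disjoint T₁ T₂ :=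
    hdisj.mono (hT₁sub.trans sdiff_subset) (hT₂sub.trans sdiff_subset)
  rw [himg, card_image_of_injOn hinj, card_union_of_disjoint hTdisj]
  have hc1 : (X₁ \ S).card = X₁.card - (S ∩ X₁).card := by
    rw [show X₁ \ S = X₁ \ (S ∩ X₁) by ext a; simp only [mem_sdiff, mem_inter]; tauto,
      card_sdiff_of_subset inter_subset_right]
  have hc2 : (X₂ \ S).card = X₂.card - (S ∩ X₂).card := by
    rw [show X₂ \ S = X₂ \ (S ∩ X₂) by ext a; simp only [mem_sdiff, mem_inter]; tauto,
      card_sdiff_of_subset inter_subset_right]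
  rw [hT₁, hT₂, apply_ite Finset.card, apply_ite Finset.card, card_empty, hc1, hc2]

theorem stmt_15 {α : Type*} [DecidableEq α] (n c w : ℕ) (hev : Even n)
    (hcodd : Odd c) (hw1 : (c + 1) / 2 ≤ w) (hw2 : w ≤ c - 1) (hn : 2 * (c + 1) ≤ n)
    (X₁ X₂ : Finset α) (hdisj : Disjoint X₁ X₂)
    (hX₁ : X₁.card = n / 2) (hX₂ : X₂.card = n / 2)
    (𝒜 ℬ : Finset (Finset α))
    (h𝒜 : 𝒜 = ((X₁ ∪ X₂).powersetCard c).filter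
      (fun A => w + 1 ≤ max (A ∩ X₁).card (A ∩ X₂).card))
    (hℬ : ℬ = ((X₁ ∪ X₂).powersetCard (c + 1)).filter
      (fun B => max (B ∩ X₁).card (B ∩ X₂).card ≤ w)) :
    ((c : ℤ) + 1) * ℬ.card
      = ((n : ℤ) - c) * ((n.choose c : ℤ) - 𝒜.card)
        - ((n : ℤ) - 2 * w) * ((n / 2).choose w : ℤ) * ((n / 2).choose (c - w) : ℤ) := by
  classical
  have hn2 : n % 2 = 0 := Nat.even_iff.mp hev
  have hc2 : c % 2 = 1 := Nat.odd_iff.mp hcodd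
  have hw1' : c + 1 ≤ 2 * w := by omega
  have hXn : (X₁ ∪ X₂).card = n := by
    rw [card_union_of_disjoint hdisj, hX₁, hX₂]; omega
  set 𝒮 := (X₁ ∪ X₂).powersetCard c with h𝒮
  -- Step A : double counting, one way
  have stepA : ∑ S ∈ 𝒮, (ℬ.filter (fun B => S ⊆ B)).card = (c + 1) * ℬ.card := by
    have hpt : ∀ B ∈ ℬ, (𝒮.filter (fun S => S ⊆ B)).card = c + 1 := by
      intro B hB
      rw [hℬ, mem_filter, mem_powersetCard] at hB
      have he : 𝒮.filter (fun S => S ⊆ B) = B.powersetCard c := by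
        ext S
        simp only [h𝒮, mem_filter, mem_powersetCard]
        constructor
        · rintro ⟨⟨_, hc⟩, hSB⟩; exact ⟨hSB, hc⟩
        · rintro ⟨hSB, hc⟩; exact ⟨⟨hSB.trans hB.1.1, hc⟩, hSB⟩
      rw [he, card_powersetCard, hB.1.2, Nat.choose_succ_self_right]
    calc ∑ S ∈ 𝒮, (ℬ.filter (fun B => S ⊆ B)).card
        = ∑ S ∈ 𝒮, ∑ B ∈ ℬ, if S ⊆ B then 1 else 0 := by
          exact sum_congr rfl fun S _ => card_filter _ _
      _ = ∑ B ∈ ℬ, ∑ S ∈ 𝒮, if S ⊆ B then 1 else 0 := sum_comm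
      _ = ∑ B ∈ ℬ, (𝒮.filter (fun S => S ⊆ B)).card := by
          exact sum_congr rfl fun B _ => (card_filter _ _).symm
      _ = ∑ B ∈ ℬ, (c + 1) := sum_congr rfl hpt
      _ = (c + 1) * ℬ.card := by rw [sum_const, smul_eq_mul, mul_comm]
  -- pointwise value over ℤ
  have keyZ : ∀ S ∈ 𝒮, ((ℬ.filter (fun B => S ⊆ B)).card : ℤ)
      = (if (S ∩ X₁).card ≤ w ∧ (S ∩ X₂).card ≤ w then (n : ℤ) - c else 0)
      - (if (S ∩ X₁).card = w ∨ (S ∩ X₂).card = w then ((n / 2 : ℕ) : ℤ) - w else 0) := by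
    intro S hS
    obtain ⟨hsub, hcard⟩ := mem_powersetCard.mp hS
    have hsplit : (S ∩ X₁).card + (S ∩ X₂).card = c := by
      rw [split_card' hdisj hsub, hcard]
    rw [hℬ, ext_count' hdisj hsub hcard, hX₁, hX₂]
    split_ifs <;> omega
  -- sum the pointwise values
  have stepB : ((c : ℤ) + 1) * ℬ.card
      = ((n : ℤ) - c) * (𝒮.filter
          (fun S => (S ∩ X₁).card ≤ w ∧ (S ∩ X₂).card ≤ w)).card
        - (((n / 2 : ℕ) : ℤ) - w) * (𝒮.filter
          (fun S => (S ∩ X₁).card = w ∨ (S ∩ X₂).card = w)).card := by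
    have h1 : ((c : ℤ) + 1) * ℬ.card = ∑ S ∈ 𝒮, ((ℬ.filter (fun B => S ⊆ B)).card : ℤ) := by
      rw [← Nat.cast_sum]
      exact_mod_cast congrArg (Nat.cast : ℕ → ℤ) stepA.symm
    rw [h1, sum_congr rfl keyZ, sum_sub_distrib]
    congr 1
    · rw [← sum_filter, sum_const, nsmul_eq_mul, mul_comm]
    · rw [← sum_filter, sum_const, nsmul_eq_mul, mul_comm]
  -- card of the "≤ w" filter
  have hP : (𝒮.filter (fun S => (S ∩ X₁).card ≤ w ∧ (S ∩ X₂).card ≤ w)).card + 𝒜.card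
      = n.choose c := by
    have hcompl := card_filter_add_card_filter_not
      (s := 𝒮) (p := fun S => w + 1 ≤ max (S ∩ X₁).card (S ∩ X₂).card)
    have he : 𝒮.filter (fun S => ¬ (w + 1 ≤ max (S ∩ X₁).card (S ∩ X₂).card))
        = 𝒮.filter (fun S => (S ∩ X₁).card ≤ w ∧ (S ∩ X₂).card ≤ w) := by
      apply filter_congr
      intro S _
      simp only [not_le, Nat.lt_add_one_iff, max_le_iff, eq_iff_iff]
    rw [he, ← h𝒜] at hcompl
    have h𝒮c : 𝒮.card = n.choose c := by rw [h𝒮, card_powersetCard, hXn]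
    omega
  -- cards of the "= w" filters
  have hQ : (𝒮.filter (fun S => (S ∩ X₁).card = w ∨ (S ∩ X₂).card = w)).card
      = 2 * ((n / 2).choose w * (n / 2).choose (c - w)) := by
    have hfo : 𝒮.filter (fun S => (S ∩ X₁).card = w ∨ (S ∩ X₂).card = w)
        = 𝒮.filter (fun S => (S ∩ X₁).card = w) ∪ 𝒮.filter (fun S => (S ∩ X₂).card = w) :=
      filter_or _ _ _
    have hdisjf : Disjoint (𝒮.filter (fun S => (S ∩ X₁).card = w))
        (𝒮.filter (fun S => (S ∩ X₂).card = w)) := by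
      rw [disjoint_left]
      intro S hS1 hS2
      obtain ⟨hSm, h1⟩ := mem_filter.mp hS1
      obtain ⟨_, h2⟩ := mem_filter.mp hS2
      obtain ⟨hsub, hcard⟩ := mem_powersetCard.mp hSm
      have := split_card' hdisj hsub
      omega
    have hq1 : (𝒮.filter (fun S => (S ∩ X₁).card = w)).card
        = (n / 2).choose w * (n / 2).choose (c - w) := by
      rw [h𝒮, count_eq' hdisj (by omega : w ≤ c), hX₁, hX₂]
    have hq2 : (𝒮.filter (fun S => (S ∩ X₂).card = w)).card
        = (n / 2).choose w * (n / 2).choose (c - w) := by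
      rw [h𝒮, union_comm, count_eq' hdisj.symm (by omega : w ≤ c), hX₁, hX₂]
    rw [hfo, card_union_of_disjoint hdisjf, hq1, hq2]
    ring
  have hPz : ((𝒮.filter (fun S => (S ∩ X₁).card ≤ w ∧ (S ∩ X₂).card ≤ w)).card : ℤ)
      = (n.choose c : ℤ) - 𝒜.card := by
    have := hP
    push_cast [← this]
    ring
  have hm : ((n / 2 : ℕ) : ℤ) * 2 = (n : ℤ) := by omega
  rw [stepB, hPz, hQ, Nat.cast_mul, Nat.cast_mul, Nat.cast_ofNat]
  linear_combination (-(((n / 2).choose w : ℤ) * ((n / 2).choose (c - w) : ℤ))) * hm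
end
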